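/- arXiv:2406.18231 — 11 statements merged into one kernel-verified Lean document; each statement's English description precedes it below -/
import Mathlib

section
/- Let G be a countably infinite discrete group. For every thick subset A of G there exists a sequence (A_n) of nonempty finite subsets of G such that: (i) A_n ⊆ A for every n; (ii) A_n ∩ A_m = ∅ for n ≠ m; (iii) for every strictly increasing sequence (n_k) in ℕ, the union ⋃_k A_{n_k} is thick. -/
/-- A subset `A` of a group `G` is thick if for every nonempty finite `K ⊆ G`
there exists `g ∈ G` with `Kg ⊆ A`. -/
def Thick {G : Type*} [Group G] (A : Set G) : Prop :=
  ∀ K : Finset G, K.Nonempty → ∃ g : G, ∀ k ∈ K, k * g ∈ A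

/-- The family of thick sets satisfies property (P1): every thick set `A` contains a sequence
of pairwise disjoint nonempty finite sets whose union along any strictly increasing sequence
of indices is thick. -/
theorem thick_P1 {G : Type*} [Group G] [Countable G] [Infinite G]
    (A : Set G) (hA : Thick A) :
    ∃ As : ℕ → Finset G,
      (∀ n, (As n).Nonempty) ∧
      (∀ n, (As n : Set G) ⊆ A) ∧
      (∀ n m, n ≠ m → Disjoint (As n) (As m)) ∧
      (∀ φ : ℕ → ℕ, StrictMono φ → Thick (⋃ k, (As (φ k) : Set G))) := by
  classical
  obtain ⟨f, hf⟩ := exists_surjective_nat G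
  set K : ℕ → Finset G := fun n => (Finset.range (n + 1)).image f with hK
  have hKne : ∀ n, (K n).Nonempty := fun n =>
    (Finset.nonempty_range_iff.2 (Nat.succ_ne_zero n)).image f
  have hKmono : Monotone K := by
    intro a b hab
    exact Finset.image_subset_image (Finset.range_subset_range.2 (by omega))
  -- key : we can always translate K n into A avoiding a finite forbidden set
  have key : ∀ (n : ℕ) (F : Finset G), ∃ g : G,
      (∀ k ∈ K n, k * g ∈ A) ∧ ∀ k ∈ K n, k * g ∉ F := by
    intro n F
    classical
    set B : Finset G := Finset.image₂ (fun k x => k⁻¹ * x) (K n) F with hB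
    obtain ⟨S, hScard⟩ := Infinite.exists_subset_card_eq G (B.card + 1)
    have hSne : S.Nonempty := Finset.card_pos.1 (by omega)
    obtain ⟨g, hg⟩ := hA (Finset.image₂ (· * ·) (K n) S)
      (Finset.Nonempty.image₂ (hKne n) hSne)
    have hex : ∃ s ∈ S, s * g ∉ B := by
      by_contra h
      push_neg at h
      have hsub : S.image (· * g) ⊆ B := by
        intro x hx
        obtain ⟨s, hs, rfl⟩ := Finset.mem_image.1 hx
        exact h s hs
      have := Finset.card_le_card hsub
      rw [Finset.card_image_of_injective _ (mul_left_injective g), hScard] at this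
      omega
    obtain ⟨s, hs, hsB⟩ := hex
    refine ⟨s * g, ?_, ?_⟩
    · intro k hk
      have := hg (k * s) (Finset.mem_image₂_of_mem hk hs)
      rwa [mul_assoc] at this
    · intro k hk hmem
      exact hsB (by
        have : k⁻¹ * (k * (s * g)) ∈ B := Finset.mem_image₂_of_mem hk hmem
        simpa using this)
  choose gfun hg1 hg2 using key
  -- recursive construction: h n = (forbidden set F n, translate g n)
  set h : ℕ → Finset G × G := fun n => Nat.rec (∅, gfun 0 ∅)
    (fun m p => (p.1 ∪ (K m).image (· * p.2),
      gfun (m + 1) (p.1 ∪ (K m).image (· * p.2)))) n with hh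
  set As : ℕ → Finset G := fun n => (K n).image (· * (h n).2) with hAs
  have hsnd : ∀ n, (h n).2 = gfun n (h n).1 := by
    intro n
    cases n with
    | zero => rfl
    | succ m => rfl
  have hFsucc : ∀ n, (h (n + 1)).1 = (h n).1 ∪ As n := fun n => rfl
  have hAsF : ∀ m n, m < n → As m ⊆ (h n).1 := by
    intro m n hmn
    induction n with
    | zero => omega
    | succ p ih =>
      rw [hFsucc]
      rcases Nat.lt_succ_iff_lt_or_eq.1 hmn with h' | h'
      · exact (ih h').trans Finset.subset_union_left
      · subst h'; exact Finset.subset_union_right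
  have hdisjF : ∀ n, ∀ x ∈ As n, x ∉ (h n).1 := by
    intro n x hx
    obtain ⟨k, hk, rfl⟩ := Finset.mem_image.1 hx
    rw [hsnd]
    exact hg2 n (h n).1 k hk
  refine ⟨As, ?_, ?_, ?_, ?_⟩
  · intro n
    exact (hKne n).image _
  · intro n x hx
    obtain ⟨k, hk, rfl⟩ := Finset.mem_image.1 hx
    rw [hsnd]
    exact hg1 n (h n).1 k hk
  · -- disjointness
    have aux : ∀ m n, m < n → Disjoint (As m) (As n) := by
      intro m n hmn
      rw [Finset.disjoint_left]
      intro x hxm hxn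
      exact hdisjF n x hxn (hAsF m n hmn hxm)
    intro n m hnm
    rcases lt_or_gt_of_ne hnm with h' | h'
    · exact aux n m h'
    · exact (aux m n h').symm
  · intro φ hφ K₀ hK₀
    classical
    set idx : G → ℕ := fun k => (hf k).choose with hidx
    have hidx' : ∀ k, f (idx k) = k := fun k => (hf k).choose_spec
    set N : ℕ := K₀.sup idx with hN
    have hK₀N : K₀ ⊆ K N := by
      intro k hk
      rw [hK]
      refine Finset.mem_image.2 ⟨idx k, ?_, hidx' k⟩
      exact Finset.mem_range.2 (Nat.lt_succ_of_le (Finset.le_sup hk))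
    have hNφ : N ≤ φ N := hφ.le_apply
    refine ⟨(h (φ N)).2, fun k hk => ?_⟩
    refine Set.mem_iUnion.2 ⟨N, ?_⟩
    exact Finset.mem_coe.2 (Finset.mem_image.2
      ⟨k, hKmono hNφ (hK₀N hk), rfl⟩)
end

section
/- Let G be a countably infinite discrete group with identity e and 𝓕 a proper Furstenberg family on G which has the Ramsey property and is left shift-invariant. Then for any F ∈ 𝓕 and any nonempty finite K ⊆ G, there exists F' ⊆ F with F' ∈ 𝓕 such that for any distinct f₁, f₂ ∈ F' ∪ {e}, Kf₁ ∩ Kf₂ = ∅. -/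
open Pointwise

open Classical in
/-- Greedy coloring of `ℕ` with `d+1` colors along a relation `adj`. -/
noncomputable def greedyCol (adj : ℕ → ℕ → Prop) (d : ℕ) : ℕ → Fin (d + 1)
  | n =>
    let used : Finset (Fin (d + 1)) :=
      ((Finset.range n).filter (fun k => adj k n)).attach.image
        (fun k => greedyCol adj d k.1)
    if h : ∃ c, c ∉ used then h.choose else 0
  decreasing_by
    exact Finset.mem_range.mp (Finset.mem_filter.mp k.2).1

open Classical in
lemma greedyCol_spec (adj : ℕ → ℕ → Prop) (d : ℕ) (n : ℕ)
    (hbound : (((Finset.range n).filter (fun k => adj k n))).card ≤ d) :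
    greedyCol adj d n ∉
      ((Finset.range n).filter (fun k => adj k n)).attach.image
        (fun k => greedyCol adj d k.1) := by
  set used := ((Finset.range n).filter (fun k => adj k n)).attach.image
        (fun k => greedyCol adj d k.1) with hused
  have hcard : used.card < d + 1 := by
    calc used.card ≤ _ := Finset.card_image_le
    _ = ((Finset.range n).filter (fun k => adj k n)).card := Finset.card_attach
    _ < d + 1 := Nat.lt_succ_of_le hbound
  have h : ∃ c : Fin (d+1), c ∉ used := by
    by_contra hc
    push_neg at hc
    have : (Finset.univ : Finset (Fin (d+1))).card ≤ used.card :=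
      Finset.card_le_card (fun c _ => hc c)
    simp [Fintype.card_fin] at this
    omega
  rw [greedyCol]
  simp only [← hused]
  rw [dif_pos h]
  exact h.choose_spec

open Classical in
lemma greedyCol_ne (adj : ℕ → ℕ → Prop) (d : ℕ) {a b : ℕ}
    (hbound : (((Finset.range b).filter (fun k => adj k b))).card ≤ d)
    (hab : a < b) (hadj : adj a b) :
    greedyCol adj d a ≠ greedyCol adj d b := by
  intro heq
  have hmem : a ∈ (Finset.range b).filter (fun k => adj k b) := by
    simp [Finset.mem_filter, Finset.mem_range, hab, hadj]
  have : greedyCol adj d a ∈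
      ((Finset.range b).filter (fun k => adj k b)).attach.image
        (fun k => greedyCol adj d k.1) :=
    Finset.mem_image.mpr ⟨⟨a, hmem⟩, Finset.mem_attach _ _, rfl⟩
  rw [heq] at this
  exact greedyCol_spec adj d b hbound this

/-- No singleton belongs to a proper, shift-invariant family with `∅ ∉ 𝓕`. -/
lemma no_singleton {G : Type*} [Group G] (𝓕 : Set (Set G))
    (hne : ∅ ∉ 𝓕)
    (hup : ∀ A B : Set G, A ∈ 𝓕 → A ⊆ B → B ∈ 𝓕)
    (hproper : 𝓕 ≠ {A : Set G | A.Nonempty})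
    (hshift : ∀ A ∈ 𝓕, ∀ g : G, (fun a => g * a) '' A ∈ 𝓕)
    (g : G) : {g} ∉ 𝓕 := by
  intro hg
  apply hproper
  ext A
  constructor
  · intro hA
    rcases Set.eq_empty_or_nonempty A with h | h
    · exact absurd (h ▸ hA) hne
    · exact h
  · rintro ⟨a, ha⟩
    have h1 : (fun x => (a * g⁻¹) * x) '' {g} ∈ 𝓕 := hshift _ hg _
    have h2 : (fun x => (a * g⁻¹) * x) '' {g} = {a} := by
      simp
    rw [h2] at h1
    exact hup _ _ h1 (by simpa using ha)

/-- Ramsey property for finite covers. -/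
lemma ramsey_finite {G : Type*} (𝓕 : Set (Set G))
    (hne : ∅ ∉ 𝓕)
    (hup : ∀ A B : Set G, A ∈ 𝓕 → A ⊆ B → B ∈ 𝓕)
    (hramsey : ∀ A A₁ A₂ : Set G, A ∈ 𝓕 → A = A₁ ∪ A₂ → A₁ ∈ 𝓕 ∨ A₂ ∈ 𝓕)
    {ι : Type*} (s : Finset ι) (B : ι → Set G) :
    ∀ A : Set G, A ∈ 𝓕 → A ⊆ ⋃ i ∈ s, B i → ∃ i ∈ s, A ∩ B i ∈ 𝓕 := by
  classical
  induction s using Finset.induction_on with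
  | empty =>
    intro A hA hcov
    simp only [Finset.notMem_empty, Set.iUnion_of_empty, Set.iUnion_empty] at hcov
    have : A = ∅ := Set.subset_empty_iff.mp hcov
    exact absurd (this ▸ hA) hne
  | insert a t hx ih =>
    intro A hA hcov
    have hsplit : A = (A ∩ B a) ∪ (A ∩ ⋃ i ∈ t, B i) := by
      rw [← Set.inter_union_distrib_left]
      refine (Set.inter_eq_left.mpr ?_).symm
      intro x hxA
      have hx' := hcov hxA
      simp only [Set.mem_iUnion, exists_prop] at hx'
      rcases hx' with ⟨i, hi, hxi⟩
      rcases Finset.mem_insert.mp hi with rfl | hi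
      · exact Set.mem_union_left _ hxi
      · exact Set.mem_union_right _ (Set.mem_biUnion hi hxi)
    rcases hramsey _ _ _ hA hsplit with h | h
    · exact ⟨a, Finset.mem_insert_self a t, h⟩
    · obtain ⟨i, hi, hmem⟩ := ih _ h Set.inter_subset_right
      exact ⟨i, Finset.mem_insert_of_mem hi,
        hup _ _ hmem (Set.inter_subset_inter_left _ Set.inter_subset_left)⟩

/-- Removing a finite set preserves membership in the family. -/
lemma diff_finset_mem {G : Type*} [Group G] (𝓕 : Set (Set G))
    (hne : ∅ ∉ 𝓕)
    (hup : ∀ A B : Set G, A ∈ 𝓕 → A ⊆ B → B ∈ 𝓕)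
    (hproper : 𝓕 ≠ {A : Set G | A.Nonempty})
    (hramsey : ∀ A A₁ A₂ : Set G, A ∈ 𝓕 → A = A₁ ∪ A₂ → A₁ ∈ 𝓕 ∨ A₂ ∈ 𝓕)
    (hshift : ∀ A ∈ 𝓕, ∀ g : G, (fun a => g * a) '' A ∈ 𝓕)
    (s : Finset G) : ∀ A : Set G, A ∈ 𝓕 → A \ ↑s ∈ 𝓕 := by
  classical
  induction s using Finset.induction_on with
  | empty => intro A hA; simpa using hA
  | insert g t hx ih =>
    intro A hA
    have h1 : A \ ↑t ∈ 𝓕 := ih A hA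
    have hsplit : A \ ↑t = ((A \ ↑t) \ {g}) ∪ ((A \ ↑t) ∩ {g}) := by
      simp [Set.diff_union_inter]
    rcases hramsey _ _ _ h1 hsplit with h | h
    · refine hup _ _ h ?_
      intro x hxm
      simp only [Set.mem_diff, Set.mem_singleton_iff, Finset.coe_insert,
        Set.mem_insert_iff] at *
      tauto
    · exact absurd (hup _ _ h Set.inter_subset_right)
        (no_singleton 𝓕 hne hup hproper hshift g)

/-- (P2) for a proper, Ramsey, left shift-invariant Furstenberg family `𝓕`: for every
`F ∈ 𝓕` and nonempty finite `K ⊆ G`, there is `F' ⊆ F` with `F' ∈ 𝓕` such that the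
translates `Kf₁`, `Kf₂` are disjoint for distinct `f₁, f₂ ∈ F' ∪ {1}`. -/
theorem family_P2 {G : Type*} [Group G] [Countable G] [Infinite G]
    (𝓕 : Set (Set G))
    (hne : ∅ ∉ 𝓕)
    (hup : ∀ A B : Set G, A ∈ 𝓕 → A ⊆ B → B ∈ 𝓕)
    (hproper : 𝓕 ≠ {A : Set G | A.Nonempty})
    (hramsey : ∀ A A₁ A₂ : Set G, A ∈ 𝓕 → A = A₁ ∪ A₂ → A₁ ∈ 𝓕 ∨ A₂ ∈ 𝓕)
    (hshift : ∀ A ∈ 𝓕, ∀ g : G, (fun a => g * a) '' A ∈ 𝓕)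
    (F : Set G) (hF : F ∈ 𝓕) (K : Finset G) (hK : K.Nonempty) :
    ∃ F' : Set G, F' ⊆ F ∧ F' ∈ 𝓕 ∧
      ∀ f₁ ∈ F' ∪ {(1 : G)}, ∀ f₂ ∈ F' ∪ {(1 : G)}, f₁ ≠ f₂ →
        ((fun k => k * f₁) '' (K : Set G)) ∩ ((fun k => k * f₂) '' (K : Set G)) = ∅ := by
  classical
  obtain ⟨e⟩ : Nonempty (G ≃ ℕ) := nonempty_equiv_of_countable
  -- the finite symmetric set of forbidden differences
  set D : Finset G := (K⁻¹ * K).erase 1 with hD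
  have hKK : ∀ x : G, x ∈ K⁻¹ * K ↔ ∃ a ∈ K, ∃ b ∈ K, a⁻¹ * b = x := by
    intro x
    constructor
    · intro hx
      obtain ⟨a, ha, b, hb, hab⟩ := Finset.mem_mul.mp hx
      exact ⟨a⁻¹, by simpa using Finset.inv_mem_inv ha, b, hb, by simpa using hab⟩
    · rintro ⟨a, ha, b, hb, rfl⟩
      exact Finset.mul_mem_mul (Finset.inv_mem_inv ha) hb
  have hDsymm : ∀ x : G, x ∈ D → x⁻¹ ∈ D := by
    intro x hx
    rw [hD, Finset.mem_erase] at hx ⊢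
    obtain ⟨hx1, hx2⟩ := hx
    refine ⟨by simpa using hx1, ?_⟩
    obtain ⟨a, ha, b, hb, rfl⟩ := (hKK x).mp hx2
    exact (hKK _).mpr ⟨b, hb, a, ha, by group⟩
  set d : ℕ := D.card with hd
  set adj : ℕ → ℕ → Prop := fun k n => e.symm k * (e.symm n)⁻¹ ∈ D with hadj
  have hbound : ∀ (n : ℕ) (inst : DecidablePred (fun k => adj k n)),
      (@Finset.filter _ (fun k => adj k n) inst (Finset.range n)).card ≤ d := by
    intro n inst
    rw [hd]
    apply Finset.card_le_card_of_injOn (fun k => e.symm k * (e.symm n)⁻¹)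
    · intro k hk
      exact (Finset.mem_filter.mp hk).2
    · intro k₁ _ k₂ _ hk
      have : e.symm k₁ = e.symm k₂ := by
        exact mul_right_cancel hk
      exact e.symm.injective this
  set col : G → Fin (d + 1) := fun g => greedyCol adj d (e g) with hcol
  have hsep : ∀ g h : G, g ≠ h → col g = col h → g * h⁻¹ ∉ D := by
    intro g h hgh hch hmem
    rcases lt_trichotomy (e g) (e h) with hlt | heq | hlt
    · refine greedyCol_ne adj d (hbound (e h) _) hlt ?_ hch
      show e.symm (e g) * (e.symm (e h))⁻¹ ∈ D
      simpa using hmem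
    · exact hgh (e.injective heq)
    · refine greedyCol_ne adj d (hbound (e g) _) hlt ?_ hch.symm
      show e.symm (e h) * (e.symm (e g))⁻¹ ∈ D
      simpa using hDsymm _ hmem
  -- Ramsey: pick a color class meeting F in 𝓕
  have hcov : F ⊆ ⋃ i ∈ (Finset.univ : Finset (Fin (d+1))), {g : G | col g = i} := by
    intro g _
    exact Set.mem_biUnion (Finset.mem_univ (col g)) rfl
  obtain ⟨i, _, hFi⟩ := ramsey_finite 𝓕 hne hup hramsey Finset.univ
    (fun i => {g : G | col g = i}) F hF hcov
  set F₀ : Set G := F ∩ {g : G | col g = i} with hF₀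
  refine ⟨F₀ \ ↑D, ?_, ?_, ?_⟩
  · exact fun x hx => hx.1.1
  · exact diff_finset_mem 𝓕 hne hup hproper hramsey hshift D F₀ hFi
  · intro f₁ hf₁ f₂ hf₂ hne12
    -- key: f₁ * f₂⁻¹ ∉ D
    have hkey : f₁ * f₂⁻¹ ∉ D := by
      rcases eq_or_ne f₁ 1 with rfl | h1
      · have hf₂' : f₂ ∈ F₀ \ ↑D := by
          rcases hf₂ with h | h
          · exact h
          · exact absurd h.symm hne12
        intro hmem
        exact hf₂'.2 (by simpa using hDsymm _ hmem)
      · rcases eq_or_ne f₂ 1 with rfl | h2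
        · have hf₁' : f₁ ∈ F₀ \ ↑D := by
            rcases hf₁ with h | h
            · exact h
            · exact absurd h hne12
          intro hmem
          exact hf₁'.2 (by simpa using hmem)
        · have hf₁' : f₁ ∈ F₀ \ ↑D := by
            rcases hf₁ with h | h
            · exact h
            · exact absurd h h1
          have hf₂' : f₂ ∈ F₀ \ ↑D := by
            rcases hf₂ with h | h
            · exact h
            · exact absurd h h2
          exact hsep f₁ f₂ hne12 (hf₁'.1.2.trans hf₂'.1.2.symm)
    -- conclude disjointness
    ext x
    simp only [Set.mem_inter_iff, Set.mem_image, Finset.mem_coe, Set.mem_empty_iff_false,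
      iff_false, not_and]
    rintro ⟨k₁, hk₁, rfl⟩ ⟨k₂, hk₂, hkeq⟩
    apply hkey
    rw [hD, Finset.mem_erase]
    constructor
    · intro h
      exact hne12 (by
        have := mul_inv_eq_one.mp h
        exact this)
    · refine (hKK _).mpr ⟨k₁, hk₁, k₂, hk₂, ?_⟩
      -- k₁ * f₁ = k₂ * f₂ ⇒ k₁⁻¹ * k₂ = f₁ * f₂⁻¹
      have h' : k₁ * f₁ = k₂ * f₂ := hkeq.symm
      calc k₁⁻¹ * k₂ = k₁⁻¹ * (k₂ * f₂) * f₂⁻¹ := by group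
        _ = k₁⁻¹ * (k₁ * f₁) * f₂⁻¹ := by rw [h']
        _ = f₁ * f₂⁻¹ := by group
end

section
/- Let G be a countably infinite discrete group. For every piecewise syndetic subset F of G there exists a sequence (F_n) of finite subsets of G such that: (i) F_n ⊆ F for every n; (ii) F_n ∩ F_m = ∅ for n ≠ m; (iii) for every strictly increasing sequence (n_k) in ℕ, ⋃_k F_{n_k} is piecewise syndetic. -/
/-- A subset `A` of a group `G` is syndetic if there is a finite `K ⊆ G` with `G = K⁻¹A`. -/
def Syndetic {G : Type*} [Group G] (A : Set G) : Prop :=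
  ∃ K : Finset G, ∀ g : G, ∃ k ∈ K, k * g ∈ A

/-- `A` is piecewise syndetic if it is the intersection of a thick set and a syndetic set. -/
def PiecewiseSyndetic {G : Type*} [Group G] (A : Set G) : Prop :=
  ∃ B C : Set G, Thick B ∧ Syndetic C ∧ A = B ∩ C

/-- A thick set admits translation witnesses avoiding any finite bad set. -/
lemma thick_avoid {G : Type*} [Group G] [Infinite G] {T : Set G}
    (hT : Thick T) (E : Finset G) (hE : E.Nonempty) (Bad : Finset G) :
    ∃ g : G, g ∉ Bad ∧ ∀ e ∈ E, e * g ∈ T := by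
  classical
  obtain ⟨X, -, hXcard⟩ := Infinite.exists_superset_card_eq (∅ : Finset G)
    (Bad.card + 1) (by simp)
  have hXne : X.Nonempty := Finset.card_pos.mp (by omega)
  obtain ⟨g', hg'⟩ := hT ((E ×ˢ X).image fun p => p.1 * p.2)
    (by exact (Finset.Nonempty.product hE hXne).image _)
  have : ∃ x ∈ X, x * g' ∉ Bad := by
    by_contra h
    push_neg at h
    have hinj : Set.InjOn (fun x => x * g') X := fun a _ b _ hab => by
      simpa using mul_right_cancel hab
    have hsub : X.image (fun x => x * g') ⊆ Bad := by
      intro y hy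
      obtain ⟨x, hx, rfl⟩ := Finset.mem_image.mp hy
      exact h x hx
    have := Finset.card_le_card hsub
    rw [Finset.card_image_of_injOn hinj, hXcard] at this
    omega
  obtain ⟨x, hx, hxb⟩ := this
  refine ⟨x * g', hxb, fun e he => ?_⟩
  have := hg' (e * x) (Finset.mem_image.mpr ⟨⟨e, x⟩, Finset.mem_product.mpr ⟨he, hx⟩, rfl⟩)
  simpa [mul_assoc] using this

/-- If `K⁻¹A` is thick (with `1 ∈ K` not assumed) then `A` is piecewise syndetic. -/
lemma ps_of_thick_preimage {G : Type*} [Group G] {A : Set G} (K : Finset G)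
    (hT : Thick {x : G | ∃ k ∈ K, k * x ∈ A}) : PiecewiseSyndetic A := by
  classical
  set K' : Finset G := insert 1 K with hK'
  set T : Set G := {x : G | ∃ k ∈ K', k * x ∈ A} with hTdef
  have hTsub : {x : G | ∃ k ∈ K, k * x ∈ A} ⊆ T := by
    rintro x ⟨k, hk, hkx⟩
    exact ⟨k, Finset.mem_insert_of_mem hk, hkx⟩
  have hTthick : Thick T := fun E hE => by
    obtain ⟨g, hg⟩ := hT E hE
    exact ⟨g, fun e he => hTsub (hg e he)⟩
  refine ⟨T, A ∪ Tᶜ, hTthick, ⟨K', fun g => ?_⟩, ?_⟩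
  · by_cases hg : g ∈ T
    · obtain ⟨k, hk, hkg⟩ := hg
      exact ⟨k, hk, Or.inl hkg⟩
    · exact ⟨1, Finset.mem_insert_self 1 K, by simpa using Or.inr hg⟩
  · ext x
    constructor
    · intro hx
      exact ⟨⟨1, Finset.mem_insert_self 1 K, by simpa using hx⟩, Or.inl hx⟩
    · rintro ⟨hxT, hxC⟩
      rcases hxC with h | h
      · exact h
      · exact absurd hxT h

/-- The family of piecewise syndetic sets satisfies property (P1). -/
theorem piecewiseSyndetic_P1 {G : Type*} [Group G] [Countable G] [Infinite G]
    (F : Set G) (hF : PiecewiseSyndetic F) :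
    ∃ Fs : ℕ → Finset G,
      (∀ n, (Fs n : Set G) ⊆ F) ∧
      (∀ n m, n ≠ m → Disjoint (Fs n) (Fs m)) ∧
      (∀ φ : ℕ → ℕ, StrictMono φ → PiecewiseSyndetic (⋃ k, (Fs (φ k) : Set G))) := by
  classical
  obtain ⟨B, C, hB, ⟨K, hK⟩, rfl⟩ := hF
  -- K⁻¹F is thick
  set T : Set G := {x : G | ∃ k ∈ K, k * x ∈ B ∩ C} with hTdef
  have hKne : K.Nonempty := by
    obtain ⟨k, hk, -⟩ := hK 1
    exact ⟨k, hk⟩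
  have hTthick : Thick T := by
    intro D hD
    obtain ⟨g, hg⟩ := hB ((K ×ˢ D).image fun p => p.1 * p.2)
      ((Finset.Nonempty.product hKne hD).image _)
    refine ⟨g, fun d hd => ?_⟩
    obtain ⟨k, hk, hkc⟩ := hK (d * g)
    refine ⟨k, hk, ?_, hkc⟩
    have := hg (k * d) (Finset.mem_image.mpr ⟨⟨k, d⟩, Finset.mem_product.mpr ⟨hk, hd⟩, rfl⟩)
    simpa [mul_assoc] using this
  -- enumeration of G
  obtain ⟨e, he⟩ := exists_surjective_nat G
  set E : ℕ → Finset G := fun n => (Finset.range (n + 1)).image e with hEdef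
  have hEne : ∀ n, (E n).Nonempty := fun n =>
    ⟨e 0, Finset.mem_image.mpr ⟨0, Finset.mem_range.mpr (Nat.succ_pos n), rfl⟩⟩
  have hEmono : ∀ {m n : ℕ}, m ≤ n → E m ⊆ E n := by
    intro m n hmn
    apply Finset.image_subset_image
    exact Finset.range_subset_range.mpr (by omega)
  -- the single construction step
  have step : ∀ (U : Finset G) (n : ℕ), ∃ Fn : Finset G,
      (Fn : Set G) ⊆ B ∩ C ∧ Disjoint Fn U ∧
      ∃ g : G, ∀ x ∈ E n, ∃ k ∈ K, k * (x * g) ∈ Fn := by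
    intro U n
    set Bad : Finset G := ((K ×ˢ E n) ×ˢ U).image
      (fun p => (p.1.1 * p.1.2)⁻¹ * p.2) with hBad
    obtain ⟨g, hgBad, hg⟩ := thick_avoid hTthick (E n) (hEne n) Bad
    refine ⟨((K ×ˢ E n).image (fun p => p.1 * p.2 * g)).filter (· ∈ B ∩ C),
      ?_, ?_, g, ?_⟩
    · intro x hx
      simpa using (Finset.mem_filter.mp hx).2
    · rw [Finset.disjoint_left]
      intro x hx hxU
      obtain ⟨⟨k, d⟩, hkd, rfl⟩ := Finset.mem_image.mp (Finset.mem_filter.mp hx).1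
      apply hgBad
      refine Finset.mem_image.mpr ⟨⟨⟨k, d⟩, k * d * g⟩, ?_, by group⟩
      exact Finset.mem_product.mpr ⟨hkd, hxU⟩
    · intro x hx
      obtain ⟨k, hk, hkx⟩ := hg x hx
      refine ⟨k, hk, Finset.mem_filter.mpr ⟨?_, hkx⟩⟩
      refine Finset.mem_image.mpr ⟨⟨k, x⟩, Finset.mem_product.mpr ⟨hk, hx⟩, by group⟩
  choose stepF hstep1 hstep2 hstep3 using step
  -- recursive construction carrying accumulated union
  let aux : ℕ → Finset G × Finset G := fun n =>
    Nat.rec (stepF ∅ 0, stepF ∅ 0)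
      (fun m prev => (stepF prev.2 (m + 1), prev.2 ∪ stepF prev.2 (m + 1))) n
  set Fs : ℕ → Finset G := fun n => (aux n).1 with hFs
  have haux2 : ∀ n, Fs n ⊆ (aux n).2 := by
    intro n
    cases n with
    | zero => exact Finset.Subset.refl _
    | succ m => exact Finset.subset_union_right
  have haux2mono : ∀ {m n : ℕ}, m ≤ n → (aux m).2 ⊆ (aux n).2 := by
    intro m n hmn
    induction n with
    | zero => simp [Nat.le_zero.mp hmn]
    | succ p ih =>
      rcases Nat.lt_or_ge m (p + 1) with h | h
      · exact (ih (Nat.lt_succ_iff.mp h)).trans Finset.subset_union_left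
      · have : m = p + 1 := le_antisymm hmn h
        subst this
        exact Finset.Subset.refl _
  have hdisj : ∀ n, Disjoint (Fs (n + 1)) ((aux n).2) := fun n => hstep2 _ _
  have hsubF : ∀ n, (Fs n : Set G) ⊆ B ∩ C := by
    intro n
    cases n with
    | zero => exact hstep1 _ _
    | succ m => exact hstep1 _ _
  have hwit : ∀ n, ∃ g : G, ∀ x ∈ E n, ∃ k ∈ K, k * (x * g) ∈ Fs n := by
    intro n
    cases n with
    | zero => exact hstep3 _ _
    | succ m => exact hstep3 _ _
  refine ⟨Fs, hsubF, ?_, ?_⟩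
  · -- disjointness
    have key : ∀ m n, m < n → Disjoint (Fs n) (Fs m) := by
      intro m n hmn
      obtain ⟨p, rfl⟩ : ∃ p, n = p + 1 := ⟨n - 1, by omega⟩
      have h1 : Fs m ⊆ (aux p).2 := (haux2 m).trans (haux2mono (by omega))
      exact (hdisj p).mono_right h1
    intro n m hnm
    rcases Nat.lt_or_ge n m with h | h
    · exact (key n m h).symm
    · exact key m n (lt_of_le_of_ne h (Ne.symm hnm))
  · -- unions along subsequences are piecewise syndetic
    intro φ hφ
    apply ps_of_thick_preimage K
    intro D hD
    -- find an index n with D ⊆ E (φ n)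
    have : ∃ n, D ⊆ E n := by
      have hf : ∀ d : G, ∃ i, e i = d := fun d => he d
      choose f hf using hf
      refine ⟨D.sup f, fun d hd => ?_⟩
      refine Finset.mem_image.mpr ⟨f d, Finset.mem_range.mpr ?_, hf d⟩
      have := Finset.le_sup (f := f) hd
      omega
    obtain ⟨n, hn⟩ := this
    have hDn : D ⊆ E (φ n) := hn.trans (hEmono (hφ.le_apply))
    obtain ⟨g, hg⟩ := hwit (φ n)
    refine ⟨g, fun d hd => ?_⟩
    obtain ⟨k, hk, hkd⟩ := hg d (hDn hd)
    exact ⟨k, hk, Set.mem_iUnion.mpr ⟨n, hkd⟩⟩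
end

section
/- Let G be a countably infinite discrete group with identity e. For every piecewise syndetic subset F of G and every nonempty finite K ⊆ G, there exists a piecewise syndetic subset F' ⊆ F such that for any distinct f₁, f₂ ∈ F' ∪ {e}, Kf₁ ∩ Kf₂ = ∅. -/
open Pointwise Finset in
lemma thick_mono {G : Type*} [Group G] {A B : Set G} (h : A ⊆ B) (hA : Thick A) : Thick B := by
  intro L hL
  obtain ⟨g, hg⟩ := hA L hL
  exact ⟨g, fun k hk => h (hg k hk)⟩

open Pointwise Finset in
lemma ps_iff {G : Type*} [Group G] (A : Set G) :
    PiecewiseSyndetic A ↔ ∃ K : Finset G, Thick {g | ∃ k ∈ K, k * g ∈ A} := by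
  classical
  constructor
  · rintro ⟨B, C, hB, ⟨K, hC⟩, rfl⟩
    refine ⟨K, fun L hL => ?_⟩
    have hKne : K.Nonempty := by
      obtain ⟨k, hk, _⟩ := hC 1; exact ⟨k, hk⟩
    obtain ⟨g, hg⟩ := hB (K * L) (hKne.mul hL)
    refine ⟨g, fun l hl => ?_⟩
    obtain ⟨k, hk, hkC⟩ := hC (l * g)
    refine ⟨k, hk, ⟨?_, hkC⟩⟩
    have := hg (k * l) (Finset.mul_mem_mul hk hl)
    rwa [mul_assoc] at this
  · rintro ⟨K, hK⟩
    set K' : Finset G := insert 1 K with hK'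
    set B : Set G := {g | ∃ k ∈ K', k * g ∈ A} with hB
    have hAB : A ⊆ B := fun a ha => ⟨1, Finset.mem_insert_self _ _, by simpa using ha⟩
    refine ⟨B, A ∪ Bᶜ, ?_, ⟨K', fun g => ?_⟩, ?_⟩
    · refine thick_mono (fun g hg => ?_) hK
      obtain ⟨k, hk, hka⟩ := hg
      exact ⟨k, Finset.mem_insert_of_mem hk, hka⟩
    · by_cases hg : g ∈ B
      · obtain ⟨k, hk, hka⟩ := hg
        exact ⟨k, hk, Or.inl hka⟩
      · exact ⟨1, Finset.mem_insert_self _ _, Or.inr (by simpa using hg)⟩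
    · ext a
      constructor
      · intro ha; exact ⟨hAB ha, Or.inl ha⟩
      · rintro ⟨haB, haC | haC⟩
        · exact haC
        · exact absurd haB haC

open Pointwise Finset in
lemma ps_union {G : Type*} [Group G] {A₁ A₂ : Set G}
    (h : PiecewiseSyndetic (A₁ ∪ A₂)) : PiecewiseSyndetic A₁ ∨ PiecewiseSyndetic A₂ := by
  classical
  rw [ps_iff] at h
  obtain ⟨K, hK⟩ := h
  by_cases h₁ : PiecewiseSyndetic A₁
  · exact Or.inl h₁
  right
  rw [ps_iff] at h₁ ⊢
  push_neg at h₁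
  have h₁K := h₁ K
  unfold Thick at h₁K
  push_neg at h₁K
  obtain ⟨L, hLne, hL⟩ := h₁K
  refine ⟨K * L, fun F hF => ?_⟩
  obtain ⟨g, hg⟩ := hK (L * F) (hLne.mul hF)
  refine ⟨g, fun f hf => ?_⟩
  obtain ⟨l, hl, hlg⟩ := hL (f * g)
  have hmem := hg (l * f) (Finset.mul_mem_mul hl hf)
  obtain ⟨k, hk, hka⟩ := hmem
  rw [show k * (l * f * g) = k * (l * (f * g)) by group] at hka
  rcases hka with hA1 | hA2
  · exact absurd ⟨k, hk, hA1⟩ hlg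
  · exact ⟨k * l, Finset.mul_mem_mul hk hl,
      by rw [show k * l * (f * g) = k * (l * (f * g)) by group]; exact hA2⟩

open Pointwise Finset in
lemma not_ps_of_finite {G : Type*} [Group G] [Infinite G] {A : Set G}
    (hA : A.Finite) : ¬ PiecewiseSyndetic A := by
  classical
  rw [ps_iff]
  rintro ⟨K, hK⟩
  set T : Set G := {g | ∃ k ∈ K, k * g ∈ A} with hT
  have hTfin : T.Finite := by
    have : T ⊆ ⋃ k ∈ (K : Set G), (fun g => k * g) ⁻¹' A := by
      rintro g ⟨k, hk, hkg⟩
      exact Set.mem_biUnion hk hkg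
    refine Set.Finite.subset ?_ this
    refine Set.Finite.biUnion K.finite_toSet fun k _ => ?_
    exact Set.Finite.preimage (Set.injOn_of_injective (mul_right_injective k)) hA
  obtain ⟨L, hLcard⟩ := Infinite.exists_subset_card_eq G (hTfin.toFinset.card + 1)
  have hLne : L.Nonempty := by
    rw [← Finset.card_pos, hLcard]; omega
  obtain ⟨g, hg⟩ := hK L hLne
  have hsub : L.image (fun l => l * g) ⊆ hTfin.toFinset := by
    intro x hx
    obtain ⟨l, hl, rfl⟩ := Finset.mem_image.mp hx
    exact hTfin.mem_toFinset.mpr (hg l hl)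
  have hcard : (L.image (fun l => l * g)).card = L.card :=
    Finset.card_image_of_injective _ (mul_left_injective g)
  have := Finset.card_le_card hsub
  rw [hcard, hLcard] at this
  omega

open Pointwise Finset in
lemma ps_diff_finite {G : Type*} [Group G] [Infinite G] {A E : Set G}
    (hE : E.Finite) (hA : PiecewiseSyndetic A) : PiecewiseSyndetic (A \ E) := by
  have hsplit : A = (A \ E) ∪ (A ∩ E) := by
    ext x; by_cases hx : x ∈ E <;> simp [hx]
  rw [hsplit] at hA
  rcases ps_union hA with h | h
  · exact h
  · exact absurd h (not_ps_of_finite (hE.inter_of_right A))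

open Pointwise Finset in
lemma ps_iUnion_fin {G : Type*} [Group G] [Infinite G] :
    ∀ (n : ℕ) (f : Fin n → Set G), PiecewiseSyndetic (⋃ i, f i) → ∃ i, PiecewiseSyndetic (f i) := by
  intro n
  induction n with
  | zero =>
    intro f hf
    simp only [Set.iUnion_of_empty] at hf
    exact absurd hf (not_ps_of_finite Set.finite_empty)
  | succ m ih =>
    intro f hf
    have : (⋃ i, f i) = f 0 ∪ ⋃ i : Fin m, f i.succ := by
      ext x
      simp only [Set.mem_iUnion, Set.mem_union]
      constructor
      · rintro ⟨i, hi⟩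
        rcases Fin.eq_zero_or_eq_succ i with rfl | ⟨j, rfl⟩
        · exact Or.inl hi
        · exact Or.inr ⟨j, hi⟩
      · rintro (h | ⟨j, hj⟩)
        · exact ⟨0, h⟩
        · exact ⟨j.succ, hj⟩
    rw [this] at hf
    rcases ps_union hf with h | h
    · exact ⟨0, h⟩
    · obtain ⟨j, hj⟩ := ih _ h
      exact ⟨j.succ, hj⟩

section Greedy

variable {G : Type*} [Group G] [DecidableEq G]

/-- The set of earlier indices that are `D`-neighbours of `i` under the enumeration `x`. -/
def nbrs (D : Finset G) (x : ℕ → G) (i : ℕ) : Finset ℕ :=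
  (Finset.range i).filter (fun j => x i * (x j)⁻¹ ∈ D)

lemma card_nbrs_le (D : Finset G) {x : ℕ → G} (hx : Function.Injective x) (i : ℕ) :
    (nbrs D x i).card ≤ D.card := by
  classical
  have : (nbrs D x i).card ≤ (D.image (fun d => d⁻¹ * x i)).card := by
    apply Finset.card_le_card_of_injOn (fun j => x j)
    · intro j hj
      have hj := Finset.mem_filter.mp hj
      refine Finset.mem_image.mpr ⟨x i * (x j)⁻¹, hj.2, by group⟩
    · intro a _ b _ hab
      exact hx hab
  exact this.trans (Finset.card_image_le)

set_option maxHeartbeats 1000000 in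
/-- Greedy colouring of `ℕ` (enumerating `G` via `x`) avoiding colours of earlier
`D`-neighbours. -/
noncomputable def col (D : Finset G) (x : ℕ → G) : ℕ → Fin (D.card + 1)
  | i =>
    if h : (Finset.univ \ ((nbrs D x i).attach.image (fun j => col D x j.1))).Nonempty then
      (Finset.univ \ ((nbrs D x i).attach.image (fun j => col D x j.1))).min' h
    else ⟨0, by omega⟩
  decreasing_by
    all_goals
      have := j.2
      simp only [nbrs, Finset.mem_filter, Finset.mem_range] at this
      exact this.1

lemma col_spec (D : Finset G) {x : ℕ → G} (hx : Function.Injective x) (i : ℕ) :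
    col D x i ∉ (nbrs D x i).attach.image (fun j => col D x j.1) := by
  classical
  set used : Finset (Fin (D.card + 1)) :=
    (nbrs D x i).attach.image (fun j => col D x j.1) with hused
  have hne : (Finset.univ \ used).Nonempty := by
    rw [Finset.sdiff_nonempty]
    intro hsub
    have h1 : (Finset.univ : Finset (Fin (D.card + 1))).card ≤ used.card :=
      Finset.card_le_card hsub
    have h2 : used.card ≤ (nbrs D x i).card := by
      calc used.card ≤ (nbrs D x i).attach.card := Finset.card_image_le
        _ = (nbrs D x i).card := Finset.card_attach
    have h3 := card_nbrs_le D hx i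
    simp only [Finset.card_univ, Fintype.card_fin] at h1
    omega
  have : col D x i = (Finset.univ \ used).min' hne := by
    conv_lhs => rw [col]
    simp only [← hused, dif_pos hne]
  rw [this]
  have := Finset.min'_mem (Finset.univ \ used) hne
  exact (Finset.mem_sdiff.mp this).2

lemma col_separated (D : Finset G) {x : ℕ → G} (hx : Function.Injective x)
    {i j : ℕ} (hij : j < i) (hc : col D x i = col D x j) :
    x i * (x j)⁻¹ ∉ D := by
  intro hD
  have hj : j ∈ nbrs D x i := by
    simp only [nbrs, Finset.mem_filter, Finset.mem_range]; exact ⟨hij, hD⟩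
  apply col_spec D hx i
  exact Finset.mem_image.mpr ⟨⟨j, hj⟩, Finset.mem_attach _ _, hc.symm⟩

end Greedy

open Pointwise Finset in
/-- The family of piecewise syndetic sets satisfies property (P2). -/
theorem piecewiseSyndetic_P2 {G : Type*} [Group G] [Countable G] [Infinite G]
    (F : Set G) (hF : PiecewiseSyndetic F) (K : Finset G) (hK : K.Nonempty) :
    ∃ F' : Set G, F' ⊆ F ∧ PiecewiseSyndetic F' ∧
      ∀ f₁ ∈ F' ∪ {(1 : G)}, ∀ f₂ ∈ F' ∪ {(1 : G)}, f₁ ≠ f₂ →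
        ((fun k => k * f₁) '' (K : Set G)) ∩ ((fun k => k * f₂) '' (K : Set G)) = ∅ := by
  classical
  -- enumeration of G
  haveI := Encodable.ofCountable G
  haveI := Denumerable.ofEncodableOfInfinite G
  set e : G ≃ ℕ := Denumerable.eqv G with he
  set x : ℕ → G := fun i => e.symm i with hx
  have hxinj : Function.Injective x := e.symm.injective
  -- the difference set
  set D : Finset G := (K⁻¹ * K).erase 1 with hD
  have hDsymm : ∀ a : G, a ∈ D → a⁻¹ ∈ D := by
    intro a ha
    rw [hD, Finset.mem_erase] at ha ⊢
    obtain ⟨ha1, hamem⟩ := ha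
    refine ⟨inv_ne_one.mpr ha1, ?_⟩
    obtain ⟨b, hb, c, hc, rfl⟩ := Finset.mem_mul.mp hamem
    obtain ⟨b', hb', rfl⟩ := Finset.mem_inv.mp hb
    refine Finset.mem_mul.mpr ⟨c⁻¹, Finset.inv_mem_inv hc, b', hb', by group⟩
  -- key: distinct elements whose quotient is not in D have disjoint K-translates
  have hdisj : ∀ f₁ f₂ : G, f₁ ≠ f₂ → f₁ * f₂⁻¹ ∉ D →
      ((fun k => k * f₁) '' (K : Set G)) ∩ ((fun k => k * f₂) '' (K : Set G)) = ∅ := by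
    intro f₁ f₂ hne hnD
    rw [Set.eq_empty_iff_forall_notMem]
    rintro y ⟨⟨k₁, hk₁, rfl⟩, ⟨k₂, hk₂, hkeq⟩⟩
    apply hnD
    rw [hD, Finset.mem_erase]
    constructor
    · intro h1
      apply hne
      have := mul_eq_one_iff_eq_inv.mp h1
      rw [this]; simp
    · refine Finset.mem_mul.mpr ⟨k₁⁻¹, Finset.inv_mem_inv hk₁, k₂, hk₂, ?_⟩
      have hkeq' : k₂ * f₂ = k₁ * f₁ := hkeq
      have : f₁ = k₁⁻¹ * (k₂ * f₂) := by rw [hkeq']; group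
      rw [this]; group
  -- colour classes
  set n : ℕ := D.card + 1 with hn
  set c : G → Fin n := fun g => col D x (e g) with hc
  set C : Fin n → Set G := fun m => {g | c g = m} with hC
  have hcover : F = ⋃ m, F ∩ C m := by
    ext g
    simp only [Set.mem_iUnion, Set.mem_inter_iff, hC, Set.mem_setOf_eq]
    exact ⟨fun hg => ⟨c g, hg, rfl⟩, fun ⟨m, hg, _⟩ => hg⟩
  obtain ⟨m, hm⟩ := ps_iUnion_fin n (fun m => F ∩ C m) (hcover ▸ hF)
  -- remove the finitely many elements conflicting with 1
  refine ⟨(F ∩ C m) \ ↑D, fun g hg => hg.1.1, ps_diff_finite D.finite_toSet hm, ?_⟩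
  -- separation within a colour class
  have hsep : ∀ g h : G, g ≠ h → c g = c h → g * h⁻¹ ∉ D := by
    intro g h hne hch
    have hne' : e g ≠ e h := fun habs => hne (e.injective habs)
    have hxg : x (e g) = g := e.symm_apply_apply g
    have hxh : x (e h) = h := e.symm_apply_apply h
    rcases lt_or_gt_of_ne hne' with hlt | hlt
    · intro hmem
      have hcc : col D x (e h) = col D x (e g) := hch.symm
      have := col_separated D hxinj hlt hcc
      rw [hxg, hxh] at this
      exact this (by simpa [mul_inv_rev] using hDsymm _ hmem)
    · intro hmem
      have hcc : col D x (e g) = col D x (e h) := hch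
      have := col_separated D hxinj hlt hcc
      rw [hxg, hxh] at this
      exact this hmem
  rintro f₁ hf₁ f₂ hf₂ hne
  apply hdisj f₁ f₂ hne
  rcases hf₁ with hf₁ | hf₁ <;> rcases hf₂ with hf₂ | hf₂
  · exact hsep f₁ f₂ hne (hf₁.1.2.trans hf₂.1.2.symm)
  · -- f₂ = 1
    rw [Set.mem_singleton_iff] at hf₂
    subst hf₂
    simpa using hf₁.2
  · -- f₁ = 1
    rw [Set.mem_singleton_iff] at hf₁
    subst hf₁
    intro hmem
    exact hf₂.2 (by simpa using hDsymm _ hmem)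
  · exact absurd (hf₁.trans hf₂.symm) hne
end

section
/- Let G be a countably infinite discrete amenable group and (F_n) a Følner sequence in G. Suppose (F'_n) is a subsequence such that |F'_n| > (n+1)(|F'_1| + ... + |F'_{n-1}|) for all n ≥ 2. Define E_1 = F'_1 and E_n = F'_n \ (F'_1 ∪ ... ∪ F'_{n-1}) for n ≥ 2. Then (E_n) is again a Følner sequence, and for every A ⊆ G the upper density of A with respect to (E_n) equals the upper density of A with respect to (F'_n). -/
open Filter

/-- `F` is a Følner sequence in `G`: a sequence of nonempty finite subsets such that
`|(gFₙ) Δ Fₙ| / |Fₙ| → 0` for every `g ∈ G`. -/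
def FolnerSeq {G : Type*} [Group G] [DecidableEq G] (F : ℕ → Finset G) : Prop :=
  (∀ n, (F n).Nonempty) ∧
  ∀ g : G, Tendsto
    (fun n => ((symmDiff ((F n).image (fun x => g * x)) (F n)).card : ℝ) / (F n).card)
    atTop (nhds 0)

/-- Upper density of `A ⊆ G` with respect to the sequence `F`:
`limsup |Fₙ ∩ A| / |Fₙ|`. -/
noncomputable def upperDensity {G : Type*} [Group G] (F : ℕ → Finset G) (A : Set G) : ℝ :=
  limsup (fun n => (((F n : Set G) ∩ A).ncard : ℝ) / (F n).card) atTop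

private lemma limsup_le_aux (a b : ℕ → ℝ) (hb0 : ∀ n, 0 ≤ b n) (hb1 : ∀ n, b n ≤ 1)
    (h : Tendsto (fun n => a n - b n) atTop (nhds 0)) :
    limsup a atTop ≤ limsup b atTop := by
  have hbb : IsBoundedUnder (· ≤ ·) atTop b := ⟨1, eventually_map.2 (.of_forall hb1)⟩
  have hbc : IsCoboundedUnder (· ≤ ·) atTop b :=
    IsBoundedUnder.isCoboundedUnder_le ⟨0, eventually_map.2 (.of_forall hb0)⟩
  refine le_of_forall_pos_le_add fun ε hε => ?_
  have hev : ∀ᶠ n in atTop, |a n - b n| < ε := by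
    have := NormedAddCommGroup.tendsto_nhds_zero.mp h ε hε
    simpa [Real.norm_eq_abs] using this
  have hac : IsCoboundedUnder (· ≤ ·) atTop a :=
    IsBoundedUnder.isCoboundedUnder_le ⟨-ε, eventually_map.2 (hev.mono fun n hn => by
      have h1 := hb0 n
      have h2 := (abs_lt.1 hn).1
      linarith)⟩
  calc limsup a atTop ≤ limsup (fun n => b n + ε) atTop := by
        refine limsup_le_limsup (hev.mono fun n hn => ?_) hac
          ⟨1 + ε, eventually_map.2 (.of_forall fun n => by have := hb1 n; linarith)⟩
        have := (abs_lt.1 hn).2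
        show a n ≤ b n + ε
        linarith
    _ = limsup b atTop + ε := limsup_add_const atTop b ε hbb hbc

private lemma limsup_eq_aux (a b : ℕ → ℝ) (ha0 : ∀ n, 0 ≤ a n) (ha1 : ∀ n, a n ≤ 1)
    (hb0 : ∀ n, 0 ≤ b n) (hb1 : ∀ n, b n ≤ 1)
    (h : Tendsto (fun n => a n - b n) atTop (nhds 0)) :
    limsup a atTop = limsup b atTop := by
  refine le_antisymm (limsup_le_aux a b hb0 hb1 h) (limsup_le_aux b a ha0 ha1 ?_)
  have := h.neg
  simpa [neg_sub] using this

/-- Disjointification of a sufficiently fast growing subsequence of a Følner sequence is again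
a Følner sequence with the same upper densities. -/
theorem folner_disjointify {G : Type*} [Group G] [Countable G] [Infinite G] [DecidableEq G]
    (F : ℕ → Finset G) (hF : FolnerSeq F)
    (φ : ℕ → ℕ) (hφ : StrictMono φ)
    (F' : ℕ → Finset G) (hF' : ∀ n, F' n = F (φ n))
    (hgrow : ∀ n, 1 ≤ n → (n + 2) * (∑ i ∈ Finset.range n, (F' i).card) < (F' n).card)
    (E : ℕ → Finset G) (hE : ∀ n, E n = F' n \ (Finset.range n).biUnion F') :
    FolnerSeq E ∧ ∀ A : Set G, upperDensity E A = upperDensity F' A := by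
  have hFne : ∀ n, (F' n).Nonempty := fun n => (hF' n) ▸ hF.1 (φ n)
  have hfpos : ∀ n, (0:ℝ) < ((F' n).card : ℝ) := fun n => by
    exact_mod_cast Finset.card_pos.2 (hFne n)
  have hEsub : ∀ n, E n ⊆ F' n := fun n => (hE n) ▸ Finset.sdiff_subset
  have hsf : ∀ n, (F' n \ E n).card + (E n).card = (F' n).card := fun n =>
    Finset.card_sdiff_add_card_eq_card (hEsub n)
  have hsB : ∀ n, (F' n \ E n) ⊆ (Finset.range n).biUnion F' := by
    intro n
    rw [hE n, Finset.sdiff_sdiff_self_left]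
    exact Finset.inter_subset_right
  have hsle : ∀ n, (F' n \ E n).card ≤ ∑ i ∈ Finset.range n, (F' i).card := fun n =>
    le_trans (Finset.card_le_card (hsB n)) Finset.card_biUnion_le
  have hgr : ∀ n : ℕ, 1 ≤ n → ((n:ℝ) + 2) * ((F' n \ E n).card : ℝ) < ((F' n).card : ℝ) := by
    intro n hn
    have h1 := hgrow n hn
    have h2 := hsle n
    have h3 : (n + 2) * (F' n \ E n).card < (F' n).card :=
      lt_of_le_of_lt (Nat.mul_le_mul_left _ h2) h1
    exact_mod_cast h3
  have hEne : ∀ n, (E n).Nonempty := by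
    intro n
    rcases Nat.eq_zero_or_pos n with h0 | h1
    · subst h0
      rw [hE 0]
      simpa using hFne 0
    · refine Finset.card_pos.1 ?_
      have h2 := hgrow n h1
      have h3 := hsle n
      have h4 := hsf n
      have h5 : (∑ i ∈ Finset.range n, (F' i).card) ≤ (n + 2) * ∑ i ∈ Finset.range n, (F' i).card :=
        Nat.le_mul_of_pos_left _ (by omega)
      omega
  have hepos : ∀ n, (0:ℝ) < ((E n).card : ℝ) := fun n => by
    exact_mod_cast Finset.card_pos.2 (hEne n)
  have hef : ∀ n, ((E n).card : ℝ) + ((F' n \ E n).card : ℝ) = ((F' n).card : ℝ) := by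
    intro n
    have := hsf n
    push_cast [← this]
    ring
  have ehalf : ∀ n : ℕ, 1 ≤ n → ((F' n).card : ℝ) / 2 ≤ ((E n).card : ℝ) := by
    intro n hn
    have h1 := hgr n hn
    have h2 := hef n
    have hn1 : (1:ℝ) ≤ (n:ℝ) := by exact_mod_cast hn
    have hs0 : (0:ℝ) ≤ ((F' n \ E n).card : ℝ) := Nat.cast_nonneg _
    nlinarith
  have hsdivf : ∀ n : ℕ, 1 ≤ n →
      ((F' n \ E n).card : ℝ) / ((F' n).card : ℝ) ≤ 1 / ((n:ℝ) + 2) := by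
    intro n hn
    rw [div_le_div_iff₀ (hfpos n) (by positivity)]
    nlinarith [hgr n hn]
  have hc : Tendsto (fun n : ℕ => (1:ℝ) / ((n:ℝ) + 2)) atTop (nhds 0) :=
    Tendsto.div_atTop tendsto_const_nhds
      (tendsto_atTop_add_const_right _ 2 tendsto_natCast_atTop_atTop)
  have hDF : ∀ g : G, Tendsto
      (fun n => ((symmDiff ((F' n).image (fun x => g * x)) (F' n)).card : ℝ) / (F' n).card)
      atTop (nhds 0) := by
    intro g
    simp only [hF']
    exact (hF.2 g).comp hφ.tendsto_atTop
  constructor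
  · refine ⟨hEne, fun g => ?_⟩
    have hkey : ∀ n, ((symmDiff ((E n).image (fun x => g * x)) (E n)).card : ℝ) ≤
        ((symmDiff ((F' n).image (fun x => g * x)) (F' n)).card : ℝ)
          + 2 * ((F' n \ E n).card : ℝ) := by
      intro n
      have hsub : symmDiff ((E n).image (fun x => g * x)) (E n) ⊆
          (symmDiff ((F' n).image (fun x => g * x)) (F' n)
            ∪ (F' n \ E n).image (fun x => g * x)) ∪ (F' n \ E n) := by
        intro x hx
        rw [Finset.mem_symmDiff] at hx
        rcases hx with ⟨hx1, hx2⟩ | ⟨hx1, hx2⟩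
        · obtain ⟨a, haE, rfl⟩ := Finset.mem_image.1 hx1
          by_cases hga : g * a ∈ F' n
          · exact Finset.mem_union_right _ (Finset.mem_sdiff.2 ⟨hga, hx2⟩)
          · refine Finset.mem_union_left _ (Finset.mem_union_left _ ?_)
            rw [Finset.mem_symmDiff]
            exact Or.inl ⟨Finset.mem_image.2 ⟨a, hEsub n haE, rfl⟩, hga⟩
        · by_cases him : ∃ a ∈ F' n, g * a = x
          · obtain ⟨a, haF, rfl⟩ := him
            refine Finset.mem_union_left _ (Finset.mem_union_right _ ?_)
            refine Finset.mem_image.2 ⟨a, Finset.mem_sdiff.2 ⟨haF, fun hEa => ?_⟩, rfl⟩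
            exact hx2 (Finset.mem_image.2 ⟨a, hEa, rfl⟩)
          · refine Finset.mem_union_left _ (Finset.mem_union_left _ ?_)
            rw [Finset.mem_symmDiff]
            refine Or.inr ⟨hEsub n hx1, fun hxim => ?_⟩
            obtain ⟨a, haF, ha⟩ := Finset.mem_image.1 hxim
            exact him ⟨a, haF, ha⟩
      have h1 := Finset.card_le_card hsub
      have h2 := Finset.card_union_le
        (symmDiff ((F' n).image (fun x => g * x)) (F' n)
          ∪ (F' n \ E n).image (fun x => g * x)) (F' n \ E n)
      have h3 := Finset.card_union_le
        (symmDiff ((F' n).image (fun x => g * x)) (F' n)) ((F' n \ E n).image (fun x => g * x))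
      have h4 := Finset.card_image_le (s := F' n \ E n) (f := fun x => g * x)
      have h5 : (symmDiff ((E n).image (fun x => g * x)) (E n)).card ≤
          (symmDiff ((F' n).image (fun x => g * x)) (F' n)).card + 2 * (F' n \ E n).card := by
        omega
      exact_mod_cast h5
    have hub : ∀ n : ℕ, 1 ≤ n →
        ((symmDiff ((E n).image (fun x => g * x)) (E n)).card : ℝ) / ((E n).card : ℝ) ≤
        2 * (((symmDiff ((F' n).image (fun x => g * x)) (F' n)).card : ℝ) / (F' n).card)
          + 4 * (1 / ((n:ℝ) + 2)) := by
      intro n hn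
      set D := ((symmDiff ((F' n).image (fun x => g * x)) (F' n)).card : ℝ) with hD
      set s := ((F' n \ E n).card : ℝ) with hs
      have hd : ((symmDiff ((E n).image (fun x => g * x)) (E n)).card : ℝ) / ((E n).card : ℝ) ≤
          (D + 2 * s) / (((F' n).card : ℝ) / 2) := by
        refine div_le_div₀ ?_ (hkey n) (by positivity) (ehalf n hn)
        positivity
      have heq : (D + 2 * s) / (((F' n).card : ℝ) / 2)
          = 2 * (D / (F' n).card) + 4 * (s / (F' n).card) := by
        field_simp
        ring
      have h2 := hsdivf n hn
      rw [heq] at hd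
      linarith
    have hu : Tendsto (fun n : ℕ =>
        2 * (((symmDiff ((F' n).image (fun x => g * x)) (F' n)).card : ℝ) / (F' n).card)
          + 4 * (1 / ((n:ℝ) + 2))) atTop (nhds 0) := by
      have := ((hDF g).const_mul 2).add (hc.const_mul 4)
      simpa using this
    exact tendsto_of_tendsto_of_tendsto_of_le_of_le' tendsto_const_nhds hu
      (Eventually.of_forall fun n => by positivity) (eventually_atTop.2 ⟨1, hub⟩)
  · intro A
    show limsup _ atTop = limsup _ atTop
    have hle1E : ∀ n, (((E n : Set G) ∩ A).ncard : ℝ) ≤ ((E n).card : ℝ) := by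
      intro n
      have h1 : ((E n : Set G) ∩ A).ncard ≤ ((E n : Set G)).ncard :=
        Set.ncard_le_ncard Set.inter_subset_left (E n).finite_toSet
      rw [Set.ncard_coe_finset] at h1
      exact_mod_cast h1
    have hle1F : ∀ n, (((F' n : Set G) ∩ A).ncard : ℝ) ≤ ((F' n).card : ℝ) := by
      intro n
      have h1 : ((F' n : Set G) ∩ A).ncard ≤ ((F' n : Set G)).ncard :=
        Set.ncard_le_ncard Set.inter_subset_left (F' n).finite_toSet
      rw [Set.ncard_coe_finset] at h1
      exact_mod_cast h1
    refine limsup_eq_aux _ _ (fun n => by positivity)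
      (fun n => div_le_one_of_le₀ (hle1E n) (by positivity))
      (fun n => by positivity)
      (fun n => div_le_one_of_le₀ (hle1F n) (by positivity)) ?_
    refine squeeze_zero_norm' ?_ hc
    refine eventually_atTop.2 ⟨1, fun n hn => ?_⟩
    set x := (((E n : Set G) ∩ A).ncard : ℝ) with hx
    set y := (((F' n : Set G) ∩ A).ncard : ℝ) with hy
    set e := ((E n).card : ℝ) with hee
    set f := ((F' n).card : ℝ) with hf
    set s := ((F' n \ E n).card : ℝ) with hss
    have he : (0:ℝ) < e := hepos n
    have hfp : (0:ℝ) < f := hfpos n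
    have hefn : e + s = f := hef n
    have hs0 : (0:ℝ) ≤ s := Nat.cast_nonneg _
    have hx0 : (0:ℝ) ≤ x := Nat.cast_nonneg _
    have hxe : x ≤ e := hle1E n
    have hxy : x ≤ y := by
      have h1 : ((E n : Set G) ∩ A).ncard ≤ ((F' n : Set G) ∩ A).ncard := by
        refine Set.ncard_le_ncard ?_ ((F' n).finite_toSet.inter_of_left A)
        exact Set.inter_subset_inter_left A (Finset.coe_subset.2 (hEsub n))
      rw [hx, hy]
      exact_mod_cast h1
    have hyx : y ≤ x + s := by
      have hcover : (F' n : Set G) ∩ A ⊆ ((E n : Set G) ∩ A) ∪ ((F' n \ E n : Finset G) : Set G) := by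
        intro z hz
        by_cases hzE : z ∈ E n
        · exact Or.inl ⟨hzE, hz.2⟩
        · exact Or.inr (by
            rw [Finset.mem_coe, Finset.mem_sdiff]
            exact ⟨hz.1, hzE⟩)
      have h1 : ((F' n : Set G) ∩ A).ncard ≤
          (((E n : Set G) ∩ A) ∪ ((F' n \ E n : Finset G) : Set G)).ncard :=
        Set.ncard_le_ncard hcover
          (((E n).finite_toSet.inter_of_left A).union (F' n \ E n).finite_toSet)
      have h2 := Set.ncard_union_le ((E n : Set G) ∩ A) ((F' n \ E n : Finset G) : Set G)
      rw [Set.ncard_coe_finset] at h2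
      have h3 : ((F' n : Set G) ∩ A).ncard ≤ ((E n : Set G) ∩ A).ncard + (F' n \ E n).card :=
        le_trans h1 h2
      rw [hy, hx, hss]
      exact_mod_cast h3
    have habs : |x / e - y / f| ≤ 1 / ((n:ℝ) + 2) := by
      have h1 : |x * f - e * y| ≤ s * e := by
        rw [abs_le]
        constructor
        · have p3 : e * y ≤ e * (x + s) := mul_le_mul_of_nonneg_left hyx he.le
          have p4 : e * x ≤ f * x := mul_le_mul_of_nonneg_right (by linarith) hx0
          nlinarith
        · have p1 : x * e ≤ y * e := mul_le_mul_of_nonneg_right hxy he.le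
          have p2 : x * s ≤ e * s := mul_le_mul_of_nonneg_right hxe hs0
          have hxf : x * f = x * e + x * s := by rw [← hefn]; ring
          linarith
      calc |x / e - y / f| = |x * f - e * y| / (e * f) := by
            rw [div_sub_div _ _ he.ne' hfp.ne', abs_div, abs_of_pos (mul_pos he hfp)]
        _ ≤ (s * e) / (e * f) := by
            gcongr
        _ = s / f := by rw [mul_comm s e, mul_div_mul_left _ _ he.ne']
        _ ≤ 1 / ((n:ℝ) + 2) := hsdivf n hn
    simpa [Real.norm_eq_abs] using habs
end

section
/- Let G be a countably infinite discrete amenable group with a fixed Følner sequence (F_n). For every subset A of G with d̄_{(F_n)}(A) > 0, there exists a sequence (A_n) of finite subsets of G such that: (i) A_n ⊆ A for every n; (ii) A_n ∩ A_m = ∅ for n ≠ m; (iii) for every strictly increasing sequence (n_k) in ℕ, the set ⋃_k A_{n_k} has positive upper density with respect to (F_n). -/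
open Filter

/-- The family of sets with positive upper density with respect to a fixed Følner sequence
satisfies property (P1). -/
theorem pud_P1 {G : Type*} [Group G] [Countable G] [Infinite G] [DecidableEq G]
    (F : ℕ → Finset G) (hF : FolnerSeq F)
    (A : Set G) (hA : 0 < upperDensity F A) :
    ∃ As : ℕ → Finset G,
      (∀ n, (As n : Set G) ⊆ A) ∧
      (∀ n m, n ≠ m → Disjoint (As n) (As m)) ∧
      (∀ φ : ℕ → ℕ, StrictMono φ → 0 < upperDensity F (⋃ k, (As (φ k) : Set G))) := by
  classical
  obtain ⟨hne, hconv⟩ := hF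
  have fpos : ∀ n, (0 : ℝ) < (F n).card := by
    intro n; exact_mod_cast Finset.card_pos.mpr (hne n)
  set δ := upperDensity F A with hδ
  set f : ℕ → ℝ := fun n => (((F n : Set G) ∩ A).ncard : ℝ) / (F n).card with hfdef
  have hud : upperDensity F A = limsup f atTop := rfl
  -- the cardinalities of the Følner sets tend to infinity
  have hcard : Tendsto (fun n => (F n).card) atTop atTop := by
    rw [tendsto_atTop]
    intro C
    by_contra h
    rw [not_eventually] at h
    have hC : 0 < C := by
      obtain ⟨n, hn⟩ := h.exists
      have : 0 < (F n).card := Finset.card_pos.mpr (hne n)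
      omega
    have hCpos : (0 : ℝ) < C := by exact_mod_cast hC
    obtain ⟨S, hS⟩ := Infinite.exists_subset_card_eq G C
    have hev : ∀ᶠ n in atTop, ∀ g ∈ S,
        ((symmDiff ((F n).image (fun x => g * x)) (F n)).card : ℝ) / (F n).card < 1 / C := by
      rw [eventually_all_finset]
      intro g _
      exact (hconv g).eventually (gt_mem_nhds (by positivity))
    obtain ⟨n, hn1, hn2⟩ := (h.and_eventually hev).exists
    have hlt : (F n).card < C := by omega
    have himg : ∀ g ∈ S, (F n).image (fun x => g * x) = F n := by
      intro g hg
      have h2 := hn2 g hg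
      rw [div_lt_div_iff₀ (fpos n) hCpos, one_mul] at h2
      have hfc : ((F n).card : ℝ) < C := by exact_mod_cast hlt
      have : ((symmDiff ((F n).image (fun x => g * x)) (F n)).card : ℝ) * C < 1 * C := by
        rw [one_mul]; linarith
      have hsc : (symmDiff ((F n).image (fun x => g * x)) (F n)).card = 0 := by
        have := lt_of_mul_lt_mul_right this hCpos.le
        have : (symmDiff ((F n).image (fun x => g * x)) (F n)).card < 1 := by exact_mod_cast this
        omega
      have := Finset.card_eq_zero.mp hsc
      rw [← Finset.bot_eq_empty] at this
      exact symmDiff_eq_bot.mp this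
    obtain ⟨x, hx⟩ := hne n
    have hsub : S.image (fun g => g * x) ⊆ F n := by
      intro y hy
      obtain ⟨g, hg, rfl⟩ := Finset.mem_image.mp hy
      rw [← himg g hg]
      exact Finset.mem_image_of_mem _ hx
    have hinj : (S.image (fun g => g * x)).card = C := by
      rw [Finset.card_image_of_injective _ (mul_left_injective x), hS]
    have := Finset.card_le_card hsub
    omega
  -- boundedness / cobound
  have hle1 : ∀ (U : Set G) (n : ℕ), (((F n : Set G) ∩ U).ncard : ℝ) / (F n).card ≤ 1 := by
    intro U n
    rw [div_le_one (fpos n)]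
    have := Set.ncard_le_ncard (Set.inter_subset_left (s := (F n : Set G)) (t := U))
      (F n).finite_toSet
    rw [Set.ncard_coe_finset] at this
    exact_mod_cast this
  -- frequently large density
  have hfreq : ∃ᶠ n in atTop, δ / 2 ≤ f n := by
    by_contra h
    rw [not_frequently] at h
    have hle : limsup f atTop ≤ δ / 2 := by
      apply limsup_le_of_le ((isBoundedUnder_of ⟨0, fun n => by positivity⟩ :
        IsBoundedUnder (· ≥ ·) atTop f).isCoboundedUnder_le)
      filter_upwards [h] with n hn
      linarith [not_le.mp hn]
    rw [← hud] at hle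
    linarith
  -- choice of good indices
  have hstep : ∀ (N : ℕ) (B : Finset G), ∃ m, N ≤ m ∧ δ / 2 ≤ f m ∧
      (B.card : ℝ) ≤ δ / 4 * (F m).card := by
    intro N B
    have h1 : ∀ᶠ m in atTop, (B.card : ℝ) ≤ δ / 4 * (F m).card := by
      have h2 : ∀ᶠ m in atTop, (⌈(B.card : ℝ) / (δ / 4)⌉₊ : ℕ) ≤ (F m).card :=
        hcard.eventually_ge_atTop _
      filter_upwards [h2] with m hm
      have h3 : ((B.card : ℝ) / (δ / 4)) ≤ ((F m).card : ℝ) :=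
        le_trans (Nat.le_ceil _) (by exact_mod_cast hm)
      rw [div_le_iff₀ (by positivity)] at h3
      linarith
    obtain ⟨m, hm1, hm2, hm3⟩ := (hfreq.and_eventually (h1.and (eventually_ge_atTop N))).exists
    exact ⟨m, hm3, hm1, hm2⟩
  choose step hstep1 hstep2 hstep3 using hstep
  -- recursive construction
  let D : ℕ → Finset G := fun n =>
    Nat.rec ∅ (fun k Dk => Dk ∪ ((F (step k Dk)).filter (· ∈ A) \ Dk)) n
  let As : ℕ → Finset G := fun n => (F (step n (D n))).filter (· ∈ A) \ D n
  have hDsucc : ∀ n, D (n + 1) = D n ∪ As n := fun n => rfl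
  have hDmono : Monotone D := monotone_nat_of_le_succ
    (fun n => by rw [hDsucc]; exact Finset.subset_union_left)
  have hAsD : ∀ n, As n ⊆ D (n + 1) := fun n => by
    rw [hDsucc]; exact Finset.subset_union_right
  have hAsdisj : ∀ n, Disjoint (As n) (D n) := fun n => Finset.sdiff_disjoint
  have hAsF : ∀ n, As n ⊆ F (step n (D n)) := fun n =>
    (Finset.sdiff_subset).trans (Finset.filter_subset _ _)
  -- cardinality lower bound
  have hAscard : ∀ n, δ / 4 * ((F (step n (D n))).card : ℝ) ≤ ((As n).card : ℝ) := by
    intro n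
    set m' := step n (D n) with hm'
    set X := (F m').filter (· ∈ A) with hX
    have hXcard : ((X.card : ℕ) : ℝ) = (((F m' : Set G) ∩ A).ncard : ℝ) := by
      have : ((F m' : Set G) ∩ A) = (X : Set G) := by
        ext x; simp [hX]
      rw [this, Set.ncard_coe_finset]
    have h2 := hstep2 n (D n)
    rw [hfdef] at h2
    have h2' : δ / 2 * ((F m').card : ℝ) ≤ (((F m' : Set G) ∩ A).ncard : ℝ) := by
      rw [le_div_iff₀ (fpos m')] at h2
      linarith
    have h3 := hstep3 n (D n)
    have h4 : X.card ≤ (X \ D n).card + (D n).card := Finset.card_le_card_sdiff_add_card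
    have h4' : ((X.card : ℕ) : ℝ) ≤ ((X \ D n).card : ℝ) + ((D n).card : ℝ) := by
      exact_mod_cast h4
    have hAs : As n = X \ D n := rfl
    rw [hAs]
    rw [hXcard] at h4'
    linarith
  refine ⟨As, ?_, ?_, ?_⟩
  · intro n x hx
    have hx' := Finset.mem_sdiff.mp hx
    exact (Finset.mem_filter.mp hx'.1).2
  · intro n m hnm
    rcases hnm.lt_or_gt with h | h
    · have hsub : As n ⊆ D m := (hAsD n).trans (hDmono h)
      exact ((hAsdisj m).mono_right hsub).symm
    · have hsub : As m ⊆ D n := (hAsD m).trans (hDmono h)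
      exact (hAsdisj n).mono_right hsub
  · intro φ hφ
    set U : Set G := ⋃ k, (As (φ k) : Set G) with hU
    have hudU : upperDensity F U =
        limsup (fun n => (((F n : Set G) ∩ U).ncard : ℝ) / (F n).card) atTop := rfl
    have hbdd : IsBoundedUnder (· ≤ ·) atTop
        (fun n => (((F n : Set G) ∩ U).ncard : ℝ) / (F n).card) :=
      isBoundedUnder_of ⟨1, fun n => hle1 U n⟩
    have hδpos : 0 < δ := hA
    have hfreq2 : ∃ᶠ n in atTop, δ / 4 ≤ (((F n : Set G) ∩ U).ncard : ℝ) / (F n).card := by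
      rw [frequently_atTop]
      intro N
      set m' := step (φ N) (D (φ N)) with hm'
      refine ⟨m', le_trans (le_trans hφ.le_apply (hstep1 (φ N) (D (φ N)))) le_rfl, ?_⟩
      have hsub : (As (φ N) : Set G) ⊆ (F m' : Set G) ∩ U := by
        intro x hx
        refine ⟨hAsF (φ N) hx, ?_⟩
        exact Set.mem_iUnion.mpr ⟨N, hx⟩
      have hfin : ((F m' : Set G) ∩ U).Finite := (F m').finite_toSet.inter_of_left U
      have h1 := Set.ncard_le_ncard hsub hfin
      rw [Set.ncard_coe_finset] at h1
      have h1' : ((As (φ N)).card : ℝ) ≤ (((F m' : Set G) ∩ U).ncard : ℝ) := by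
        exact_mod_cast h1
      have h2 := hAscard (φ N)
      rw [le_div_iff₀ (fpos m')]
      calc δ / 4 * ((F m').card : ℝ) ≤ ((As (φ N)).card : ℝ) := h2
        _ ≤ _ := h1'
    have := le_limsup_of_frequently_le hfreq2 hbdd
    rw [← hudU] at this
    linarith
end

section
/- Let G be a countably infinite discrete group with identity e and 𝓕 a Furstenberg family on G. Suppose (X,G) is a G-system on a compact metric space, x ∈ X is an 𝓕-recurrent point, and U is a neighborhood of x with N(x,U) ⊆ F for some F ⊆ G with e ∈ F. Then F contains a symmetrically 𝓕-set F' with e ∈ F'. -/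
/-- `A ⊆ G` is a symmetrically `𝓕`-set: for all nonempty finite `F₁ ⊆ A` and
`F₂ ⊆ G \ A`, the set `⋂_{f₁∈F₁} f₁⁻¹A ∩ ⋂_{f₂∈F₂} f₂⁻¹(G\A)` belongs to `𝓕`. -/
def SymmetricallySet {G : Type*} [Group G] (𝓕 : Set (Set G)) (A : Set G) : Prop :=
  ∀ F₁ F₂ : Finset G, F₁.Nonempty → F₂.Nonempty →
    (F₁ : Set G) ⊆ A → (F₂ : Set G) ⊆ Aᶜ →
    ((⋂ f₁ ∈ F₁, (fun g => f₁ * g) ⁻¹' A) ∩ ⋂ f₂ ∈ F₂, (fun g => f₂ * g) ⁻¹' Aᶜ) ∈ 𝓕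

/-- If `x` is an `𝓕`-recurrent point of a `G`-system on a compact metric space and `U` is a
neighborhood of `x` with `N(x,U) ⊆ F`, `e ∈ F`, then `F` contains a symmetrically `𝓕`-set
containing `e`. -/
theorem return_times_contain_symm_set {G : Type*} [Group G] [Countable G] [Infinite G]
    (𝓕 : Set (Set G))
    (hup : ∀ A B : Set G, A ∈ 𝓕 → A ⊆ B → B ∈ 𝓕)
    (X : Type*) [MetricSpace X] [CompactSpace X]
    (act : G → X → X)
    (hone : ∀ x : X, act 1 x = x)
    (hmul : ∀ g h : G, ∀ x : X, act (g * h) x = act g (act h x))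
    (hcont : ∀ g : G, Continuous (act g))
    (x : X) (hrec : ∀ U ∈ nhds x, {g : G | act g x ∈ U} ∈ 𝓕)
    (U : Set X) (hU : U ∈ nhds x)
    (F : Set G) (heF : (1 : G) ∈ F) (hNF : {g : G | act g x ∈ U} ⊆ F) :
    ∃ F' : Set G, F' ⊆ F ∧ (1 : G) ∈ F' ∧ SymmetricallySet 𝓕 F' := by
  obtain ⟨ε, hε, hballU⟩ := Metric.mem_nhds_iff.mp hU
  -- the set of distances from orbit points to `x` is countable
  set S : Set ℝ := Set.range (fun g : G => dist (act g x) x) with hS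
  have hScount : S.Countable := Set.countable_range _
  -- choose `0 < r < ε` avoiding `S`
  have hIoo : ¬ (Set.Ioo (0:ℝ) ε ⊆ S) := by
    intro hsub
    have hc : (Set.Ioo (0:ℝ) ε).Countable := hScount.mono hsub
    have hle : Cardinal.mk (Set.Ioo (0:ℝ) ε) ≤ Cardinal.aleph0 := by
      rw [Cardinal.mk_le_aleph0_iff]
      exact Set.countable_coe_iff.mpr hc
    rw [Cardinal.mk_Ioo_real hε] at hle
    exact absurd hle (not_le.mpr Cardinal.aleph0_lt_continuum)
  obtain ⟨r, hrIoo, hrS⟩ := Set.not_subset.mp hIoo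
  obtain ⟨hr0, hrε⟩ := hrIoo
  set V : Set X := Metric.ball x r with hV
  set F' : Set G := {g : G | act g x ∈ V} with hF'
  -- key: points of the orbit outside `V` are outside the closed ball
  have hkey : ∀ g : G, g ∉ F' → act g x ∉ Metric.closedBall x r := by
    intro g hg hcl
    have h1 : dist (act g x) x ≤ r := Metric.mem_closedBall.mp hcl
    have h2 : ¬ dist (act g x) x < r := hg
    have : dist (act g x) x = r := le_antisymm h1 (not_lt.mp h2)
    exact hrS ⟨g, this⟩
  refine ⟨F', ?_, ?_, ?_⟩
  · intro g hg
    exact hNF (hballU (Metric.ball_subset_ball hrε.le hg))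
  · show act 1 x ∈ V
    rw [hone]
    simpa [hV] using hr0
  · intro F₁ F₂ hF₁ hF₂ h₁ h₂
    set W : Set X := (⋂ f ∈ F₁, (act f) ⁻¹' V) ∩
      ⋂ f ∈ F₂, (act f) ⁻¹' (Metric.closedBall x r)ᶜ with hW
    have hWopen : IsOpen W := by
      apply IsOpen.inter
      · exact isOpen_biInter_finset fun f _ => (Metric.isOpen_ball).preimage (hcont f)
      · exact isOpen_biInter_finset fun f _ =>
          (Metric.isClosed_closedBall.isOpen_compl).preimage (hcont f)
    have hxW : x ∈ W := by
      constructor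
      · refine Set.mem_iInter₂.mpr fun f hf => ?_
        have := h₁ hf
        simpa [hF'] using this
      · refine Set.mem_iInter₂.mpr fun f hf => ?_
        exact hkey f (h₂ hf)
    have hWnhds : W ∈ nhds x := hWopen.mem_nhds hxW
    refine hup _ _ (hrec W hWnhds) ?_
    intro g hg
    obtain ⟨hg1, hg2⟩ := Set.mem_setOf_eq ▸ hg
    constructor
    · refine Set.mem_iInter₂.mpr fun f hf => ?_
      show act (f * g) x ∈ V
      rw [hmul]
      exact Set.mem_iInter₂.mp hg1 f hf
    · refine Set.mem_iInter₂.mpr fun f hf => ?_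
      show act (f * g) x ∉ V
      rw [hmul]
      intro hmem
      exact Set.mem_iInter₂.mp hg2 f hf (Metric.ball_subset_closedBall hmem)
end

section
/- Let (X,T) be a topological dynamical system on a compact metric space, x ∈ X an 𝓕-recurrent point with respect to a Furstenberg family 𝓕 of subsets of ℕ₀ (or more generally, for a G-system with x 𝓕-recurrent), and U a neighborhood of x with N(x,U) ⊆ F. Then there exists a decreasing sequence (F_n) of subsets of F, each in 𝓕, such that for every n and every f ∈ F_n there exists m with f·F_m ⊆ F_n. -/
/-- If `x` is an `𝓕`-recurrent point of a `G`-system on a compact metric space and `U` is a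
neighborhood of `x` with `N(x,U) ⊆ F`, then there is a decreasing sequence `(Fₙ)` of subsets
of `F`, each in `𝓕`, such that for every `n` and `f ∈ Fₙ` there is `m` with `f·Fₘ ⊆ Fₙ`. -/
theorem return_times_decreasing_structure {G : Type*} [Group G] [Countable G] [Infinite G]
    (𝓕 : Set (Set G))
    (hup : ∀ A B : Set G, A ∈ 𝓕 → A ⊆ B → B ∈ 𝓕)
    (X : Type*) [MetricSpace X] [CompactSpace X]
    (act : G → X → X)
    (hone : ∀ x : X, act 1 x = x)
    (hmul : ∀ g h : G, ∀ x : X, act (g * h) x = act g (act h x))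
    (hcont : ∀ g : G, Continuous (act g))
    (x : X) (hrec : ∀ U ∈ nhds x, {g : G | act g x ∈ U} ∈ 𝓕)
    (U : Set X) (hU : U ∈ nhds x)
    (F : Set G) (hNF : {g : G | act g x ∈ U} ⊆ F) :
    ∃ Fs : ℕ → Set G,
      (∀ n, Fs (n + 1) ⊆ Fs n) ∧
      (∀ n, Fs n ⊆ F) ∧
      (∀ n, Fs n ∈ 𝓕) ∧
      (∀ n, ∀ f ∈ Fs n, ∃ m, ∀ g ∈ Fs m, f * g ∈ Fs n) := by
  obtain ⟨ε, hε, hball⟩ := Metric.mem_nhds_iff.mp hU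
  refine ⟨fun n => {g : G | act g x ∈ Metric.ball x (ε / 2 ^ n)}, ?_, ?_, ?_, ?_⟩
  · intro n g hg
    refine Metric.ball_subset_ball ?_ hg
    have h2 : (2:ℝ) ^ n ≤ 2 ^ (n+1) := by
      apply pow_le_pow_right₀ <;> norm_num
    exact div_le_div_of_nonneg_left hε.le (by positivity) h2 |>.trans_eq rfl
  · intro n g hg
    exact hNF (hball (Metric.ball_subset_ball (div_le_self hε.le (one_le_pow₀ one_le_two)) hg))
  · intro n
    exact hrec _ (Metric.ball_mem_nhds x (by positivity))
  · intro n f hf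
    have hopen : IsOpen ((act f) ⁻¹' Metric.ball x (ε / 2 ^ n)) :=
      Metric.isOpen_ball.preimage (hcont f)
    obtain ⟨δ, hδ, hδsub⟩ := Metric.isOpen_iff.mp hopen x hf
    obtain ⟨m, hm⟩ := exists_pow_lt_of_lt_one (by positivity : (0:ℝ) < δ / ε)
      (by norm_num : (1:ℝ)/2 < 1)
    refine ⟨m, fun g hg => ?_⟩
    have hlt : ε / 2 ^ m < δ := by
      have : ε * ((1/2) ^ m) < ε * (δ / ε) := by
        exact mul_lt_mul_of_pos_left hm hε
      rw [mul_div_cancel₀ _ hε.ne'] at this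
      calc ε / 2 ^ m = ε * ((1/2) ^ m) := by rw [div_eq_mul_inv, one_div, inv_pow]
        _ < δ := this
    have : act g x ∈ Metric.ball x δ := Metric.ball_subset_ball hlt.le hg
    have := hδsub this
    simpa [hmul] using this
end

section
/- Let G be a countably infinite discrete group. If F ⊆ G is a central set containing the identity e, then there exists a decreasing sequence (F_n) of piecewise syndetic subsets of F such that for every n and every f ∈ F_n there exists m with f·F_m ⊆ F_n. -/
/-- A `G`-system: a continuous action of `G` on a compact metric space. -/
structure GSystem (G : Type*) [Group G] where
  X : Type
  [ms : MetricSpace X]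
  [cs : CompactSpace X]
  act : G → X → X
  act_one : ∀ x, act 1 x = x
  act_mul : ∀ g h x, act (g * h) x = act g (act h x)
  act_cont : ∀ g, Continuous (act g)

attribute [instance] GSystem.ms GSystem.cs

/-- `F ⊆ G` is a central set: there are a `G`-system, a point `x`, an almost periodic point
`y` proximal to `x`, and a neighborhood `U` of `y` with `N(x,U) ⊆ F`. -/
def Central {G : Type*} [Group G] (F : Set G) : Prop :=
  ∃ (S : GSystem G) (x y : S.X) (U : Set S.X),
    (∀ ε > (0 : ℝ), ∃ g : G, dist (S.act g x) (S.act g y) < ε) ∧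
    (∀ V ∈ nhds y, Syndetic {g : G | S.act g y ∈ V}) ∧
    U ∈ nhds y ∧
    {g : G | S.act g x ∈ U} ⊆ F

attribute [local instance] Ultrafilter.mul Ultrafilter.semigroup

namespace CentralAux

variable {G : Type*} [Group G]

theorem mem_mul_iff {U V : Ultrafilter G} {A : Set G} :
    A ∈ U * V ↔ {a | {b | a * b ∈ A} ∈ V} ∈ U := Iff.rfl

/-- If `u` lies in a minimal left ideal, then `{g | g⁻¹A ∈ u}` is syndetic for `A ∈ u`. -/
theorem syndetic_of_mem (u : Ultrafilter G)
    (hmin : ∀ q : Ultrafilter G, ∃ s : Ultrafilter G, s * (q * u) = u)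
    {A : Set G} (hA : A ∈ u) : Syndetic {g : G | {h : G | g * h ∈ A} ∈ u} := by
  set B := {g : G | {h : G | g * h ∈ A} ∈ u} with hB
  by_contra hnot
  rw [Syndetic] at hnot
  push_neg at hnot
  classical
  set C : Finset G → Set G := fun K => {g | ∀ k ∈ K, k * g ∉ B} with hC
  have hCne : ∀ K, (C K).Nonempty := fun K => hnot K
  have hdir : Directed (· ≥ ·) (fun K => (Filter.principal (C K))) := by
    intro K K'
    refine ⟨K ∪ K', Filter.principal_mono.2 ?_, Filter.principal_mono.2 ?_⟩
    · intro g hg k hk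
      exact hg k (Finset.mem_union_left _ hk)
    · intro g hg k hk
      exact hg k (Finset.mem_union_right _ hk)
  haveI : (⨅ K, Filter.principal (C K)).NeBot :=
    Filter.iInf_neBot_of_directed' hdir fun K => Filter.principal_neBot_iff.2 (hCne K)
  obtain ⟨q, hq⟩ := Ultrafilter.exists_le (⨅ K, Filter.principal (C K))
  obtain ⟨s, hs⟩ := hmin q
  have hA' : A ∈ s * (q * u) := by rw [hs]; exact hA
  rw [mem_mul_iff] at hA'
  obtain ⟨a, ha⟩ := Ultrafilter.nonempty_of_mem hA'
  rw [Set.mem_setOf_eq, mem_mul_iff] at ha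
  have hCa : C {a} ∈ q := hq (Filter.mem_iInf_of_mem {a} (Filter.mem_principal_self _))
  obtain ⟨c, hc1, hc2⟩ := Ultrafilter.nonempty_of_mem (Filter.inter_mem ha hCa)
  have hac : a * c ∉ B := hc2 a (Finset.mem_singleton_self a)
  apply hac
  have hc1' : {d | a * (c * d) ∈ A} ∈ u := hc1
  rw [hB, Set.mem_setOf_eq]
  have : {h | a * c * h ∈ A} = {d | a * (c * d) ∈ A} := by
    ext d; simp [mul_assoc]
  rw [this]
  exact hc1'

theorem thick_mono {A B : Set G} (h : A ⊆ B) (hA : Thick A) : Thick B := by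
  intro K hK
  obtain ⟨g, hg⟩ := hA K hK
  exact ⟨g, fun k hk => h (hg k hk)⟩

/-- Every member of such a `u` is piecewise syndetic. -/
theorem piecewiseSyndetic_of_mem (u : Ultrafilter G)
    (hmin : ∀ q : Ultrafilter G, ∃ s : Ultrafilter G, s * (q * u) = u)
    {A : Set G} (hA : A ∈ u) : PiecewiseSyndetic A := by
  classical
  obtain ⟨K, hK⟩ := syndetic_of_mem u hmin hA
  set T : Set G := {g | ∃ k ∈ K, k * g ∈ A} with hT
  have hthick : Thick T := by
    intro H _
    choose k hkK hk using fun h => hK h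
    have hDmem : (⋂ h ∈ H, {c | (k h * h) * c ∈ A}) ∈ u :=
      (Filter.biInter_finset_mem H).2 fun h _ => hk h
    obtain ⟨t, ht⟩ := Ultrafilter.nonempty_of_mem hDmem
    refine ⟨t, fun h hh => ?_⟩
    have := Set.mem_iInter₂.1 ht h hh
    exact ⟨k h, hkK h, by rw [← mul_assoc]; exact this⟩
  refine ⟨A ∪ T, A ∪ Tᶜ, thick_mono Set.subset_union_right hthick, ?_, ?_⟩
  · refine ⟨insert 1 K, fun g => ?_⟩
    by_cases hg : g ∈ T
    · obtain ⟨k, hkK, hk⟩ := hg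
      exact ⟨k, Finset.mem_insert_of_mem hkK, Or.inl hk⟩
    · exact ⟨1, Finset.mem_insert_self _ _, by simpa using Or.inr hg⟩
  · ext g
    constructor
    · intro hg; exact ⟨Or.inl hg, Or.inl hg⟩
    · rintro ⟨hg1 | hg1, hg2 | hg2⟩ <;> first | exact hg1 | exact hg2 | exact absurd hg1 hg2

/-- The star of a set with respect to an ultrafilter. -/
def ustar (u : Ultrafilter G) (A : Set G) : Set G :=
  {g | g ∈ A ∧ {h | g * h ∈ A} ∈ u}

theorem ustar_subset (u : Ultrafilter G) (A : Set G) : ustar u A ⊆ A := fun _ h => h.1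

theorem ustar_mem (u : Ultrafilter G) (hu : u * u = u) {A : Set G} (hA : A ∈ u) :
    ustar u A ∈ u := by
  have h2 : {g | {h | g * h ∈ A} ∈ u} ∈ u := by
    rw [← mem_mul_iff, hu]; exact hA
  exact Filter.inter_mem hA h2

theorem ustar_key (u : Ultrafilter G) (hu : u * u = u) {A : Set G} {g : G}
    (hg : g ∈ ustar u A) : {h | g * h ∈ ustar u A} ∈ u := by
  have h1 : {h | g * h ∈ A} ∈ u := hg.2
  have h2 : {c | {d | (g * c) * d ∈ A} ∈ u} ∈ u := by
    have h3 : {h | g * h ∈ A} ∈ u * u := by rw [hu]; exact h1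
    rw [mem_mul_iff] at h3
    convert h3 using 2
    ext c
    simp [mul_assoc]
  have h4 : {h | g * h ∈ A} ∩ {c | {d | (g * c) * d ∈ A} ∈ u} ∈ u := Filter.inter_mem h1 h2
  refine Filter.mem_of_superset h4 ?_
  rintro h ⟨hh1, hh2⟩
  exact ⟨hh1, hh2⟩

variable (S : GSystem G)

/-- Action of an ultrafilter on a point via the Stone–Čech extension. -/
noncomputable def pact (p : Ultrafilter G) (z : S.X) : S.X :=
  Ultrafilter.extend (fun g => S.act g z) p

theorem pact_le_nhds (p : Ultrafilter G) (z : S.X) :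
    ↑(p.map fun g => S.act g z) ≤ nhds (pact S p z) :=
  ultrafilter_extend_eq_iff.mp rfl

theorem pact_mem (p : Ultrafilter G) (z : S.X) {O : Set S.X} (hO : O ∈ nhds (pact S p z)) :
    {g | S.act g z ∈ O} ∈ p :=
  pact_le_nhds S p z hO

theorem pact_eq_of_le (p : Ultrafilter G) (z : S.X) {c : S.X}
    (h : ↑(p.map fun g => S.act g z) ≤ nhds c) : pact S p z = c :=
  ultrafilter_extend_eq_iff.mpr h

theorem pact_continuous (z : S.X) : Continuous (fun p => pact S p z) :=
  continuous_ultrafilter_extend _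

theorem pact_mul (p q : Ultrafilter G) (z : S.X) :
    pact S (p * q) z = pact S p (pact S q z) := by
  apply pact_eq_of_le
  intro O hO
  obtain ⟨O', hsub, hopen, hmem⟩ := mem_nhds_iff.mp hO
  show (fun g => S.act g z) ⁻¹' O ∈ (p * q)
  rw [mem_mul_iff]
  have h1 : {a | S.act a (pact S q z) ∈ O'} ∈ p :=
    pact_mem S p _ (hopen.mem_nhds hmem)
  have key : {a : G | {b : G | S.act (a * b) z ∈ O'} ∈ q} ∈ p := by
    refine Filter.mem_of_superset h1 ?_
    intro a ha
    have hpre : (S.act a) ⁻¹' O' ∈ nhds (pact S q z) :=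
      ((hopen.preimage (S.act_cont a)).mem_nhds ha)
    have := pact_mem S q z hpre
    refine Filter.mem_of_superset this ?_
    intro b hb
    simpa [S.act_mul] using hb
  have hss : {a : G | {b : G | S.act (a * b) z ∈ O'} ∈ q} ⊆
      {a : G | {b : G | ((fun g => S.act g z) ⁻¹' O) (a * b)} ∈ q} := by
    intro a ha
    exact Filter.mem_of_superset ha fun b hb => hsub hb
  exact Filter.mem_of_superset key hss

/-- If `A ∈ p` and the orbit of `z` along `A` lies in closed `C`, then `pact p z ∈ C`. -/
theorem pact_mem_closed (p : Ultrafilter G) (z : S.X) {A : Set G} {C : Set S.X}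
    (hA : A ∈ p) (hC : IsClosed C) (h : ∀ g ∈ A, S.act g z ∈ C) : pact S p z ∈ C := by
  by_contra hc
  have : {g | S.act g z ∈ Cᶜ} ∈ p := pact_mem S p z (hC.isOpen_compl.mem_nhds hc)
  obtain ⟨g, hg1, hg2⟩ := Ultrafilter.nonempty_of_mem (Filter.inter_mem hA this)
  exact hg2 (h g hg1)

/-- Hyperfilter limit of a convergent sequence of orbit points. -/
theorem pact_hyper (f : ℕ → G) (z c : S.X)
    (h : Filter.Tendsto (fun n => S.act (f n) z) Filter.atTop (nhds c)) :
    pact S ((Filter.hyperfilter ℕ).map f) z = c := by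
  apply pact_eq_of_le
  have hle : (↑(Filter.hyperfilter ℕ) : Filter ℕ) ≤ Filter.atTop := by
    rw [← Nat.cofinite_eq_atTop]; exact Filter.hyperfilter_le_cofinite
  have h2 : Filter.Tendsto (fun n => S.act (f n) z) (↑(Filter.hyperfilter ℕ)) (nhds c) :=
    h.mono_left hle
  simpa [Filter.Tendsto, Filter.map_map, Function.comp_def] using h2

open Classical in
/-- The recursively defined decreasing sequence of sets. -/
noncomputable def centralSeq (u : Ultrafilter G) (F : Set G) (e : ℕ → ℕ × G) : ℕ → Set G
  | 0 => ustar u F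
  | (k+1) =>
      ustar u (centralSeq u F e k ∩
        (if (e k).2 ∈ centralSeq u F e (min (e k).1 k) then
          {g | (e k).2 * g ∈ centralSeq u F e (min (e k).1 k)} else Set.univ))
  termination_by k => k
  decreasing_by all_goals omega

open Classical in
theorem centralSeq_succ (u : Ultrafilter G) (F : Set G) (e : ℕ → ℕ × G) (k : ℕ) :
    centralSeq u F e (k + 1) = ustar u (centralSeq u F e k ∩
        (if (e k).2 ∈ centralSeq u F e (min (e k).1 k) then
          {g | (e k).2 * g ∈ centralSeq u F e (min (e k).1 k)} else Set.univ)) := by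
  rw [centralSeq]

open Classical in
theorem centralSeq_star_form (u : Ultrafilter G) (hu : u * u = u) (F : Set G) (hF : F ∈ u)
    (e : ℕ → ℕ × G) : ∀ k, ∃ A ∈ u, centralSeq u F e k = ustar u A := by
  intro k
  induction k using Nat.strong_induction_on with
  | _ k ih =>
    match k with
    | 0 => exact ⟨F, hF, by rw [centralSeq]⟩
    | (j+1) =>
      obtain ⟨A, hA, hAeq⟩ := ih j (Nat.lt_succ_self j)
      obtain ⟨A', hA', hA'eq⟩ := ih (min (e j).1 j) (Nat.lt_succ_of_le (min_le_right _ _))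
      refine ⟨centralSeq u F e j ∩
        (if (e j).2 ∈ centralSeq u F e (min (e j).1 j) then
          {g | (e j).2 * g ∈ centralSeq u F e (min (e j).1 j)} else Set.univ),
        ?_, centralSeq_succ u F e j⟩
      refine Filter.inter_mem ?_ ?_
      · rw [hAeq]; exact ustar_mem u hu hA
      · split_ifs with hcond
        · rw [hA'eq] at hcond ⊢
          exact ustar_key u hu hcond
        · exact Filter.univ_mem

theorem centralSeq_mem (u : Ultrafilter G) (hu : u * u = u) (F : Set G) (hF : F ∈ u)
    (e : ℕ → ℕ × G) (k : ℕ) : centralSeq u F e k ∈ u := by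
  obtain ⟨A, hA, hAeq⟩ := centralSeq_star_form u hu F hF e k
  rw [hAeq]; exact ustar_mem u hu hA

theorem centralSeq_antitone (u : Ultrafilter G) (F : Set G) (e : ℕ → ℕ × G) (k : ℕ) :
    centralSeq u F e (k + 1) ⊆ centralSeq u F e k := by
  rw [centralSeq_succ]
  exact fun g hg => (ustar_subset u _ hg).1

end CentralAux

open CentralAux

/-- Every central set `F` containing the identity admits a decreasing sequence of piecewise
syndetic subsets `(Fₙ)` such that for all `n` and `f ∈ Fₙ` there is `m` with `f·Fₘ ⊆ Fₙ`. -/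
theorem central_set_structure {G : Type*} [Group G] [Countable G] [Infinite G]
    (F : Set G) (heF : (1 : G) ∈ F) (hF : Central F) :
    ∃ Fs : ℕ → Set G,
      (∀ n, Fs (n + 1) ⊆ Fs n) ∧
      (∀ n, Fs n ⊆ F) ∧
      (∀ n, PiecewiseSyndetic (Fs n)) ∧
      (∀ n, ∀ f ∈ Fs n, ∃ m, ∀ g ∈ Fs m, f * g ∈ Fs n) := by
  classical
  obtain ⟨S, x, y, U, hprox, hap, hUy, hNF⟩ := hF
  set Y : Set S.X := closure (Set.range fun g => S.act g y) with hY
  have hYclosed : IsClosed Y := isClosed_closure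
  have horbY : ∀ g : G, S.act g y ∈ Y := fun g => subset_closure ⟨g, rfl⟩
  -- minimality of the orbit closure of the almost periodic point `y`
  have minY : ∀ z ∈ Y, ∀ ε : ℝ, 0 < ε → ∃ g : G, dist (S.act g z) y < ε := by
    intro z hz ε hε
    obtain ⟨K, hK⟩ := hap (Metric.ball y (ε/2)) (Metric.ball_mem_nhds y (by positivity))
    by_contra hcon
    push_neg at hcon
    set W : Set S.X := ⋂ k ∈ K, (S.act k) ⁻¹' (Metric.closedBall y (ε/2))ᶜ with hW
    have hWopen : IsOpen W := isOpen_biInter_finset fun k _ =>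
      (Metric.isClosed_closedBall.isOpen_compl).preimage (S.act_cont k)
    have hzW : z ∈ W := by
      refine Set.mem_iInter₂.2 fun k _ => ?_
      simp only [Set.mem_preimage, Set.mem_compl_iff, Metric.mem_closedBall, not_le]
      calc ε/2 < ε := by linarith
        _ ≤ dist (S.act k z) y := hcon k
    obtain ⟨w, hwW, hwr⟩ := mem_closure_iff.mp hz W hWopen hzW
    obtain ⟨g, rfl⟩ := hwr
    obtain ⟨k, hkK, hk⟩ := hK g
    have h1 : S.act k (S.act g y) ∈ (Metric.closedBall y (ε/2))ᶜ :=
      Set.mem_iInter₂.1 hwW k hkK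
    rw [← S.act_mul] at h1
    exact h1 (Metric.ball_subset_closedBall hk)
  -- an ultrafilter witnessing proximality
  choose gs hgs using fun n : ℕ => hprox (1/((n:ℝ)+1)) (by positivity)
  set r₀ : Ultrafilter G := (Filter.hyperfilter ℕ).map gs with hr₀
  have hr₀S : pact S r₀ x = pact S r₀ y := by
    by_contra hne
    set ε := dist (pact S r₀ x) (pact S r₀ y) with hε
    have hεpos : 0 < ε := dist_pos.2 hne
    have s1 : {n : ℕ | S.act (gs n) x ∈ Metric.ball (pact S r₀ x) (ε/3)} ∈
        Filter.hyperfilter ℕ := by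
      have h := pact_mem S r₀ x (Metric.ball_mem_nhds _ (show (0:ℝ) < ε/3 by positivity))
      rw [hr₀, Ultrafilter.mem_map] at h
      exact h
    have s2 : {n : ℕ | S.act (gs n) y ∈ Metric.ball (pact S r₀ y) (ε/3)} ∈
        Filter.hyperfilter ℕ := by
      have h := pact_mem S r₀ y (Metric.ball_mem_nhds _ (show (0:ℝ) < ε/3 by positivity))
      rw [hr₀, Ultrafilter.mem_map] at h
      exact h
    have s3 : {n : ℕ | 1/((n:ℝ)+1) < ε/3} ∈ Filter.hyperfilter ℕ := by
      apply Filter.hyperfilter_le_cofinite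
      rw [Nat.cofinite_eq_atTop]
      exact Filter.Tendsto.eventually_lt_const (by positivity)
        tendsto_one_div_add_atTop_nhds_zero_nat
    obtain ⟨n, ⟨hn1, hn2⟩, hn3⟩ :=
      Ultrafilter.nonempty_of_mem (Filter.inter_mem (Filter.inter_mem s1 s2) s3)
    rw [Set.mem_setOf_eq, Metric.mem_ball] at hn1 hn2
    have tri : dist (pact S r₀ x) (pact S r₀ y) ≤
        dist (pact S r₀ x) (S.act (gs n) x) + dist (S.act (gs n) x) (S.act (gs n) y) +
          dist (S.act (gs n) y) (pact S r₀ y) := dist_triangle4 _ _ _ _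
    have hgsn := hgs n
    have hn3' : (1:ℝ)/((n:ℝ)+1) < ε/3 := hn3
    rw [dist_comm] at hn1
    have : ε < ε := by
      calc ε ≤ _ := tri
        _ < ε/3 + ε/3 + ε/3 := by
            apply add_lt_add (add_lt_add hn1 (lt_trans hgsn hn3')) hn2
        _ = ε := by ring
    exact lt_irrefl _ this
  -- the semigroup of proximality witnesses and a minimal left ideal inside it
  set S₀ : Set (Ultrafilter G) := {p | pact S p x = pact S p y} with hS₀
  set 𝒞 : Set (Set (Ultrafilter G)) :=
    {L | L.Nonempty ∧ IsClosed L ∧ (∀ p q, q ∈ L → p * q ∈ L) ∧ L ⊆ S₀} with h𝒞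
  have hrangemem : ∀ w : Ultrafilter G, w ∈ S₀ → Set.range (· * w) ∈ 𝒞 := by
    intro w hw
    refine ⟨⟨w * w, ⟨w, rfl⟩⟩, (isCompact_range (Ultrafilter.continuous_mul_left w)).isClosed,
      ?_, ?_⟩
    · rintro p q ⟨s, rfl⟩
      exact ⟨p * s, mul_assoc p s w⟩
    · rintro q ⟨s, rfl⟩
      show pact S (s * w) x = pact S (s * w) y
      rw [pact_mul, pact_mul, hw]
  have hL₀mem : Set.range (· * r₀) ∈ 𝒞 := hrangemem r₀ hr₀S
  have hzorn : ∃ L, Minimal (· ∈ 𝒞) L := by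
    refine zorn_superset _ fun c hcs hc => ?_
    rcases c.eq_empty_or_nonempty with rfl | hcne
    · exact ⟨Set.range (· * r₀), hL₀mem, by simp⟩
    · refine ⟨⋂₀ c, ⟨?_, isClosed_sInter fun t ht => (hcs ht).2.1, ?_, ?_⟩,
        fun s hs => Set.sInter_subset_of_mem hs⟩
      · rw [Set.sInter_eq_iInter]
        haveI := hcne.coe_sort
        apply IsCompact.nonempty_iInter_of_directed_nonempty_isCompact_isClosed
          ((↑) : c → Set (Ultrafilter G))
        · exact DirectedOn.directed_val (IsChain.directedOn hc.symm)
        · exact fun i => (hcs i.prop).1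
        · exact fun i => (hcs i.prop).2.1.isCompact
        · exact fun i => (hcs i.prop).2.1
      · intro p q hq
        exact Set.mem_sInter.2 fun t ht => (hcs ht).2.2.1 p q (Set.mem_sInter.1 hq t ht)
      · obtain ⟨t, ht⟩ := hcne
        exact (Set.sInter_subset_of_mem ht).trans (hcs ht).2.2.2
  obtain ⟨L, hL⟩ := hzorn
  obtain ⟨hLne, hLclosed, hLideal, hLS₀⟩ := hL.prop
  have hrange : ∀ w ∈ L, Set.range (· * w) = L := by
    intro w hw
    have hsub : Set.range (· * w) ⊆ L := by
      rintro q ⟨s, rfl⟩; exact hLideal s w hw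
    exact hsub.antisymm (hL.2 (hrangemem w (hLS₀ hw)) hsub)
  -- an idempotent fixing y
  obtain ⟨q₀, hq₀⟩ := hLne
  have hzY : pact S q₀ y ∈ Y :=
    pact_mem_closed S q₀ y Filter.univ_mem hYclosed (fun g _ => horbY g)
  choose hs hhs using fun n : ℕ => minY _ hzY (1/((n:ℝ)+1)) (by positivity)
  have htend : Filter.Tendsto (fun n => S.act (hs n) (pact S q₀ y)) Filter.atTop (nhds y) := by
    rw [tendsto_iff_dist_tendsto_zero]
    exact squeeze_zero (fun n => dist_nonneg) (fun n => (hhs n).le)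
      tendsto_one_div_add_atTop_nhds_zero_nat
  set r₁ : Ultrafilter G := (Filter.hyperfilter ℕ).map hs with hr₁def
  have hr₁ : pact S r₁ (pact S q₀ y) = y := pact_hyper S hs _ y htend
  set T : Set (Ultrafilter G) := L ∩ {p | pact S p y = y} with hT
  have hTne : T.Nonempty := ⟨r₁ * q₀, hLideal r₁ q₀ hq₀, by
    show pact S (r₁ * q₀) y = y
    rw [pact_mul, hr₁]⟩
  have hTclosed : IsClosed T :=
    hLclosed.inter (isClosed_eq (pact_continuous S y) continuous_const)
  obtain ⟨u, huT, huu⟩ := exists_idempotent_in_compact_subsemigroup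
    (M := Ultrafilter G) Ultrafilter.continuous_mul_left T hTne hTclosed.isCompact
    (by
      rintro p ⟨hpL, hpy⟩ q ⟨hqL, hqy⟩
      refine ⟨hLideal p q hqL, ?_⟩
      show pact S (p * q) y = y
      rw [pact_mul]
      rw [Set.mem_setOf_eq] at hpy hqy
      rw [hqy, hpy])
  have hux : pact S u x = y := by
    have h1 : pact S u x = pact S u y := hLS₀ huT.1
    rw [h1]
    exact huT.2
  have hFu : F ∈ u :=
    Filter.mem_of_superset (pact_mem S u x (by rw [hux]; exact hUy)) hNF
  have hmin : ∀ q : Ultrafilter G, ∃ s, s * (q * u) = u := by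
    intro q
    have hqu : q * u ∈ L := hLideal q u huT.1
    have h2 := hrange (q * u) hqu
    have huL : u ∈ Set.range (· * (q * u)) := h2 ▸ huT.1
    exact huL
  -- the enumeration and the recursive sequence
  obtain ⟨e', he'⟩ := exists_surjective_nat (ℕ × G)
  set e : ℕ → ℕ × G := fun k => e' (Nat.unpair k).2 with he
  refine ⟨centralSeq u F e, fun n => centralSeq_antitone u F e n, ?_, ?_, ?_⟩
  · have h0 : ∀ n, centralSeq u F e n ⊆ centralSeq u F e 0 := by
      intro n
      induction n with
      | zero => exact subset_rfl
      | succ m ihm => exact (centralSeq_antitone u F e m).trans ihm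
    intro n
    refine (h0 n).trans ?_
    rw [show centralSeq u F e 0 = ustar u F from by rw [centralSeq]]
    exact ustar_subset u F
  · intro n
    exact piecewiseSyndetic_of_mem u hmin (centralSeq_mem u huu F hFu e n)
  · intro n f hf
    obtain ⟨k₀, hk₀⟩ := he' (n, f)
    set k : ℕ := Nat.pair n k₀ with hk
    have hek : e k = (n, f) := by rw [he]; simp [hk, Nat.unpair_pair, hk₀]
    have hnk : n ≤ k := Nat.left_le_pair n k₀
    have hmin' : min (e k).1 k = n := by rw [hek]; exact min_eq_left hnk
    refine ⟨k + 1, fun g hg => ?_⟩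
    rw [centralSeq_succ] at hg
    replace hg := (ustar_subset u _ hg).2
    rw [hmin'] at hg
    simp only [hek] at hg
    rw [if_pos hf] at hg
    exact hg
end

section
/- Let G be a countably infinite discrete group and 𝓕 a Furstenberg family with the Ramsey property such that h(𝓕) = {p ∈ βG : p ⊆ 𝓕} is a nonempty closed subsemigroup of βG. For any action of G on a compact Hausdorff space X and any point x ∈ X: x is 𝓕-recurrent (N(x,U) ∈ 𝓕 for every neighborhood U of x) if and only if there exists an idempotent ultrafilter p ∈ h(𝓕) with p-lim_{g∈G} gx = x. -/
attribute [local instance] Ultrafilter.semigroup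

/-- The hull of a family `𝓕`: the set of ultrafilters on `G` all of whose members lie in `𝓕`. -/
def hull {G : Type*} [Group G] (𝓕 : Set (Set G)) : Set (Ultrafilter G) :=
  {p : Ultrafilter G | ∀ A ∈ p, A ∈ 𝓕}

/-- If `h(𝓕)` is a nonempty closed subsemigroup of `βG`, then for an action of `G` on a
compact Hausdorff space, a point `x` is `𝓕`-recurrent iff there is an idempotent
`p ∈ h(𝓕)` with `p-lim_{g} gx = x`. -/
theorem fRecurrent_iff_idempotent {G : Type*} [Group G] [Countable G] [Infinite G]
    (𝓕 : Set (Set G))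
    (hne : ∅ ∉ 𝓕)
    (hup : ∀ A B : Set G, A ∈ 𝓕 → A ⊆ B → B ∈ 𝓕)
    (hramsey : ∀ A A₁ A₂ : Set G, A ∈ 𝓕 → A = A₁ ∪ A₂ → A₁ ∈ 𝓕 ∨ A₂ ∈ 𝓕)
    (hhne : (hull 𝓕).Nonempty) (hhcl : IsClosed (hull 𝓕))
    (hhsub : ∀ p ∈ hull 𝓕, ∀ q ∈ hull 𝓕, p * q ∈ hull 𝓕)
    (X : Type*) [TopologicalSpace X] [CompactSpace X] [T2Space X]
    (act : G → X → X)
    (hone : ∀ x : X, act 1 x = x)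
    (hmul : ∀ g h : G, ∀ x : X, act (g * h) x = act g (act h x))
    (hcont : ∀ g : G, Continuous (act g))
    (x : X) :
    (∀ U ∈ nhds x, {g : G | act g x ∈ U} ∈ 𝓕) ↔
      ∃ p : Ultrafilter G, p ∈ hull 𝓕 ∧ p * p = p ∧
        ∀ U ∈ nhds x, {g : G | act g x ∈ U} ∈ p := by
  classical
  constructor
  · intro hrec
    -- Step 1: finite Ramsey property
    have finRamsey : ∀ (t : Finset (Set G)) (A : Set G), A ∈ 𝓕 → (A ⊆ ⋃ B ∈ t, B) →
        ∃ B ∈ t, A ∩ B ∈ 𝓕 := by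
      intro t
      induction t using Finset.induction_on with
      | empty =>
        intro A hA hsub
        simp only [Finset.notMem_empty, Set.iUnion_of_empty, Set.iUnion_empty,
          Set.subset_empty_iff] at hsub
        exact absurd (hsub ▸ hA) hne
      | insert B t hBt ih =>
        intro A hA hsub
        rcases hramsey A (A ∩ B) (A \ B) hA (Set.inter_union_diff A B).symm with h | h
        · exact ⟨B, Finset.mem_insert_self _ _, h⟩
        · have hsub' : A \ B ⊆ ⋃ C ∈ t, C := by
            intro a ha
            have := hsub ha.1
            simp only [Finset.mem_insert, Set.mem_iUnion, exists_prop] at this ⊢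
            rcases this with ⟨C, hC | hC, haC⟩
            · exact absurd (hC ▸ haC) ha.2
            · exact ⟨C, hC, haC⟩
          obtain ⟨C, hCt, hC⟩ := ih (A \ B) h hsub'
          exact ⟨C, Finset.mem_insert_of_mem hCt,
            hup _ _ hC (Set.inter_subset_inter_left _ Set.diff_subset)⟩
    -- Step 2: every member of 𝓕 lies in some ultrafilter from the hull
    have hullmem : ∀ A : Set G, A ∈ 𝓕 → ∃ p : Ultrafilter G, p ∈ hull 𝓕 ∧ A ∈ p := by
      intro A hA
      by_contra hcon
      push_neg at hcon
      have hcov : {p : Ultrafilter G | A ∈ p} ⊆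
          ⋃ B : {B : Set G // B ∉ 𝓕}, {p : Ultrafilter G | B.1 ∈ p} := by
        intro p hp
        have : p ∉ hull 𝓕 := fun h => hcon p h hp
        simp only [hull, Set.mem_setOf_eq, not_forall] at this
        obtain ⟨B, hBp, hB⟩ := this
        exact Set.mem_iUnion.mpr ⟨⟨B, hB⟩, hBp⟩
      obtain ⟨t, ht⟩ := (ultrafilter_isClosed_basic A).isCompact.elim_finite_subcover
        (fun B : {B : Set G // B ∉ 𝓕} => {p : Ultrafilter G | B.1 ∈ p})
        (fun B => ultrafilter_isOpen_basic B.1) hcov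
      have hAsub : A ⊆ ⋃ B ∈ t.image Subtype.val, B := by
        intro a ha
        have : (pure a : Ultrafilter G) ∈ ⋃ B ∈ t, {p : Ultrafilter G | B.1 ∈ p} :=
          ht (by simpa using ha)
        simp only [Set.mem_iUnion, Set.mem_setOf_eq, Ultrafilter.mem_pure, exists_prop] at this
        obtain ⟨B, hBt, haB⟩ := this
        simp only [Set.mem_iUnion, exists_prop]
        exact ⟨B.1, Finset.mem_image_of_mem _ hBt, haB⟩
      obtain ⟨B, hBt, hB⟩ := finRamsey _ A hA hAsub
      obtain ⟨B', hB't, rfl⟩ := Finset.mem_image.mp hBt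
      exact B'.2 (hup _ _ hB Set.inter_subset_right)
    -- Step 3: the relevant closed subsemigroup
    set T : {U : Set X // U ∈ nhds x} → Set (Ultrafilter G) :=
      fun U => {p : Ultrafilter G | {g : G | act g x ∈ U.1} ∈ p} with hT
    set S : Set (Ultrafilter G) := hull 𝓕 ∩ ⋂ U, T U with hS
    have hScl : IsClosed S :=
      hhcl.inter (isClosed_iInter fun U => ultrafilter_isClosed_basic _)
    have hSne : S.Nonempty := by
      apply hhcl.isCompact.inter_iInter_nonempty T
        (fun U => ultrafilter_isClosed_basic _)
      intro u
      have hV : (⋂ U ∈ u, U.1) ∈ nhds x :=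
        (Filter.biInter_mem u.finite_toSet).mpr fun U _ => U.2
      obtain ⟨p, hp, hAp⟩ := hullmem _ (hrec _ hV)
      refine ⟨p, hp, ?_⟩
      simp only [Set.mem_iInter]
      intro U hU
      refine Filter.mem_of_superset hAp fun g hg => ?_
      have : act g x ∈ ⋂ U ∈ u, U.1 := hg
      simp only [Set.mem_iInter] at this
      exact this U hU
    have hSmul : ∀ p ∈ S, ∀ q ∈ S, p * q ∈ S := by
      rintro p ⟨hp, hp2⟩ q ⟨hq, hq2⟩
      simp only [Set.mem_iInter] at hp2 hq2
      refine ⟨hhsub p hp q hq, ?_⟩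
      simp only [Set.mem_iInter]
      rintro ⟨U, hU⟩
      have hPQ : ∀ᶠ g in ↑(p * q), act g x ∈ U := by
        rw [Ultrafilter.eventually_mul]
        have hV : interior U ∈ nhds x := interior_mem_nhds.mpr hU
        filter_upwards [hp2 ⟨interior U, hV⟩] with g hg
        have hg' : act g x ∈ interior U := hg
        have hW : (act g) ⁻¹' interior U ∈ nhds x :=
          (hcont g).continuousAt.preimage_mem_nhds (isOpen_interior.mem_nhds hg')
        filter_upwards [hq2 ⟨(act g) ⁻¹' interior U, hW⟩] with h hh
        have : act g (act h x) ∈ interior U := hh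
        rw [hmul]
        exact interior_subset this
      exact hPQ
    obtain ⟨m, hmS, hmm⟩ := exists_idempotent_in_compact_subsemigroup
      Ultrafilter.continuous_mul_left S hSne hScl.isCompact hSmul
    obtain ⟨hm1, hm2⟩ := hmS
    simp only [Set.mem_iInter] at hm2
    exact ⟨m, hm1, hmm, fun U hU => hm2 ⟨U, hU⟩⟩
  · rintro ⟨p, hp, -, hlim⟩ U hU
    exact hp _ (hlim U hU)
end

section
/- Let G be a countably infinite discrete group and (X, βG) an action of βG on a compact Hausdorff space X, with S a nonempty closed subsemigroup of βG∖G containing the smallest ideal K(βG). If a point x ∈ X is distal (for every idempotent p ∈ βG, px = x), then for every βG-action (Y, βG) and every S-recurrent point y ∈ Y (i.e. py = y for some p ∈ S), there exists an idempotent u ∈ S with u(x,y) = (x,y); in particular (x,y) is S-recurrent in the product action. -/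
attribute [local instance] Ultrafilter.semigroup

variable {G : Type*} [Group G]

/-- `L` is a left ideal of `βG`. -/
def IsLeftIdeal (L : Set (Ultrafilter G)) : Prop :=
  L.Nonempty ∧ ∀ q ∈ L, ∀ p : Ultrafilter G, p * q ∈ L

/-- `L` is a minimal left ideal of `βG`. -/
def IsMinimalLeftIdeal (L : Set (Ultrafilter G)) : Prop :=
  IsLeftIdeal L ∧ ∀ L' ⊆ L, IsLeftIdeal L' → L' = L

/-- The smallest ideal `K(βG)`: the union of all minimal left ideals of `βG`. -/
def smallestIdeal (G : Type*) [Group G] : Set (Ultrafilter G) :=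
  {p : Ultrafilter G | ∃ L : Set (Ultrafilter G), IsMinimalLeftIdeal L ∧ p ∈ L}

/-- Let `X` be a compact Hausdorff space with a `βG`-action and `S` a nonempty closed
subsemigroup of `βG ∖ G` containing `K(βG)`. If `x` is distal (fixed by every idempotent
of `βG`), then for every `βG`-action on a compact Hausdorff space `Y` and every
`S`-recurrent point `y`, there is an idempotent `u ∈ S` with `u(x,y) = (x,y)`; in
particular `(x,y)` is `S`-recurrent in the product action. -/
theorem distal_S_product_recurrent [Countable G] [Infinite G]
    (X : Type*) [TopologicalSpace X] [CompactSpace X] [T2Space X]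
    (Phi : Ultrafilter G → X → X)
    (hPhimul : ∀ p q : Ultrafilter G, ∀ x : X, Phi p (Phi q x) = Phi (p * q) x)
    (hPhicont : ∀ x : X, Continuous fun p : Ultrafilter G => Phi p x)
    (S : Set (Ultrafilter G))
    (hSne : S.Nonempty) (hScl : IsClosed S)
    (hSsub : ∀ p ∈ S, ∀ q ∈ S, p * q ∈ S)
    (hSG : ∀ g : G, (pure g : Ultrafilter G) ∉ S)
    (hK : smallestIdeal G ⊆ S)
    (x : X) (hx : ∀ p : Ultrafilter G, p * p = p → Phi p x = x) :
    ∀ (Y : Type) [TopologicalSpace Y] [CompactSpace Y] [T2Space Y]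
      (Psi : Ultrafilter G → Y → Y),
      (∀ p q : Ultrafilter G, ∀ y : Y, Psi p (Psi q y) = Psi (p * q) y) →
      (∀ y : Y, Continuous fun p : Ultrafilter G => Psi p y) →
      ∀ y : Y, (∃ p ∈ S, Psi p y = y) →
        ∃ u ∈ S, u * u = u ∧ Phi u x = x ∧ Psi u y = y := by
  intro Y _ _ _ Psi hPsimul hPsicont y ⟨p, hpS, hpy⟩
  obtain ⟨u, huT, huu⟩ := exists_idempotent_in_compact_subsemigroup
    (@Ultrafilter.continuous_mul_left G _) {q ∈ S | Psi q y = y}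
    ⟨p, hpS, hpy⟩
    (((hScl.inter (isClosed_eq (hPsicont y) continuous_const)) : IsClosed _).isCompact)
    (fun a ha b hb => ⟨hSsub a ha.1 b hb.1, by rw [← hPsimul, hb.2, ha.2]⟩)
  exact ⟨u, huT.1, huu, hx u huu, huT.2⟩
end
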